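/- arXiv:2003.12661 — 7 statements merged into one kernel-verified Lean document; each statement's English description precedes it below -/
import Mathlib

section
/- The feasible region P_k for consecutive patterns, defined as the set of vectors v ∈ [0,1]^{S_k} for which there exists a sequence of permutations σ^m with |σ^m| → ∞ and cocc(π,σ^m)/|σ^m| → v_π for all π ∈ S_k, is a convex subset of [0,1]^{S_k}. -/
/-!
An occurrence of a consecutive pattern of length `k` in a direct sum `τ ⊕ σ` lies inside `τ`,
inside the shifted copy of `σ`, or straddles the junction, so `cocc π (τ ⊕ σ)` equals
`cocc π τ + cocc π σ` up to an error of at most `k + 1`. If `σ_m` and `τ_m` (of sizes `n_m`, `n'_m`)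
realise `v` and `w`, the direct sum of `⌊θ m⌋ n'_m` copies of `σ_m` and `(m - ⌊θ m⌋) n_m` copies
of `τ_m` has size `m n_m n'_m`, and its normalised occurrence vector differs from
`(⌊θ m⌋ / m) occ(σ_m) + (1 - ⌊θ m⌋ / m) occ(τ_m)` by `O(1/n_m + 1/n'_m + 1/m)`; hence it
realises `θ v + (1 - θ) w`. The bounds `0 ≤ v π ≤ 1` follow from `cocc π σ ≤ |σ| + 1`.
-/

open Filter Finset

/-- The value of the permutation `σ` at a natural-number index (junk value `0` out of range). -/
def papp {n : ℕ} (σ : Equiv.Perm (Fin n)) (j : ℕ) : ℕ :=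
  if h : j < n then (σ ⟨j, h⟩ : ℕ) else 0

/-- The number of consecutive occurrences of the pattern `π` in `σ`:
the number of intervals `i, i+1, …, i+k-1` of indices such that `σ` restricted to them
is in the same relative order as `π`. -/
def cocc {k n : ℕ} (π : Equiv.Perm (Fin k)) (σ : Equiv.Perm (Fin n)) : ℕ :=
  ((Finset.range (n + 1 - k)).filter
    (fun i => ∀ a b : Fin k, π a < π b ↔ papp σ (i + (a : ℕ)) < papp σ (i + (b : ℕ)))).card

/-- The direct sum `τ ⊕ σ` of two permutations: `τ(1)…τ(m)(σ(1)+m)…(σ(n)+m)`. -/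
def dsum {m n : ℕ} (τ : Equiv.Perm (Fin m)) (σ : Equiv.Perm (Fin n)) :
    Equiv.Perm (Fin (m + n)) :=
  finSumFinEquiv.permCongr (Equiv.sumCongr τ σ)

/-- The feasible region `P_k` for consecutive patterns: the set of vectors
`v ∈ ℝ^{S_k}` for which there is a sequence of permutations whose sizes tend to
infinity and whose normalized consecutive-occurrence vectors tend to `v`. -/
def feasibleRegion (k : ℕ) : Set (Equiv.Perm (Fin k) → ℝ) :=
  { v | ∃ (N : ℕ → ℕ) (σ : ∀ m, Equiv.Perm (Fin (N m))),
      Filter.Tendsto N Filter.atTop Filter.atTop ∧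
      ∀ π : Equiv.Perm (Fin k),
        Filter.Tendsto (fun m => (cocc π (σ m) : ℝ) / (N m : ℝ)) Filter.atTop (nhds (v π)) }

namespace ConsecutivePattern

section Combinatorics

variable {k m n : ℕ}

def OccursAt (π : Equiv.Perm (Fin k)) (σ : Equiv.Perm (Fin n)) (i : ℕ) : Prop :=
  ∀ a b : Fin k, π a < π b ↔ papp σ (i + (a : ℕ)) < papp σ (i + (b : ℕ))

instance (π : Equiv.Perm (Fin k)) (σ : Equiv.Perm (Fin n)) : DecidablePred (OccursAt π σ) :=
  fun _ => by unfold OccursAt; infer_instance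

def coccSet (π : Equiv.Perm (Fin k)) (σ : Equiv.Perm (Fin n)) : Finset ℕ :=
  (range (n + 1 - k)).filter (OccursAt π σ)

theorem card_coccSet (π : Equiv.Perm (Fin k)) (σ : Equiv.Perm (Fin n)) :
    #(coccSet π σ) = cocc π σ :=
  rfl

theorem mem_coccSet {π : Equiv.Perm (Fin k)} {σ : Equiv.Perm (Fin n)} {i : ℕ} :
    i ∈ coccSet π σ ↔ i + k ≤ n ∧ OccursAt π σ i := by
  rw [coccSet, mem_filter, mem_range]
  exact Iff.and (by omega) Iff.rfl

theorem cocc_le (π : Equiv.Perm (Fin k)) (σ : Equiv.Perm (Fin n)) : cocc π σ ≤ n + 1 :=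
  (card_filter_le _ _).trans ((card_range _).trans_le (Nat.sub_le _ _))

theorem occursAt_congr {π : Equiv.Perm (Fin k)} {ρ : Equiv.Perm (Fin m)}
    {σ : Equiv.Perm (Fin n)} {f : ℕ → ℕ} (hf : StrictMono f) {i j : ℕ}
    (h : ∀ a : Fin k, papp ρ (i + a) = f (papp σ (j + a))) :
    OccursAt π ρ i ↔ OccursAt π σ j := by
  simp only [OccursAt, h, hf.lt_iff_lt]

theorem papp_dsum_left (τ : Equiv.Perm (Fin m)) (σ : Equiv.Perm (Fin n)) {j : ℕ} (hj : j < m) :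
    papp (dsum τ σ) j = papp τ j := by
  have hj' : j < m + n := by omega
  rw [papp, papp, dif_pos hj', dif_pos hj, dsum, Equiv.permCongr_apply,
    show (⟨j, hj'⟩ : Fin (m + n)) = Fin.castAdd n ⟨j, hj⟩ from rfl,
    finSumFinEquiv_symm_apply_castAdd]
  simp

theorem papp_dsum_right (τ : Equiv.Perm (Fin m)) (σ : Equiv.Perm (Fin n)) {j : ℕ} (hj : j < n) :
    papp (dsum τ σ) (m + j) = m + papp σ j := by
  have hj' : m + j < m + n := by omega
  rw [papp, papp, dif_pos hj', dif_pos hj, dsum, Equiv.permCongr_apply,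
    show (⟨m + j, hj'⟩ : Fin (m + n)) = Fin.natAdd m ⟨j, hj⟩ from rfl,
    finSumFinEquiv_symm_apply_natAdd]
  simp

theorem occursAt_dsum_left {π : Equiv.Perm (Fin k)} (τ : Equiv.Perm (Fin m))
    (σ : Equiv.Perm (Fin n)) {i : ℕ} (hi : i + k ≤ m) :
    OccursAt π (dsum τ σ) i ↔ OccursAt π τ i :=
  occursAt_congr strictMono_id fun a => papp_dsum_left τ σ (by omega)

theorem occursAt_dsum_right {π : Equiv.Perm (Fin k)} (τ : Equiv.Perm (Fin m))
    (σ : Equiv.Perm (Fin n)) {j : ℕ} (hj : j + k ≤ n) :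
    OccursAt π (dsum τ σ) (m + j) ↔ OccursAt π σ j :=
  occursAt_congr (add_right_strictMono (a := m)) fun a => by
    rw [add_assoc]; exact papp_dsum_right τ σ (by omega)

section DirectSum

variable (π : Equiv.Perm (Fin k)) (τ : Equiv.Perm (Fin m)) (σ : Equiv.Perm (Fin n))

theorem coccSet_union_subset_coccSet_dsum :
    coccSet π τ ∪ (coccSet π σ).map (addLeftEmbedding m) ⊆ coccSet π (dsum τ σ) := by
  intro i hi
  simp only [mem_union, Finset.mem_map, addLeftEmbedding_apply] at hi
  rcases hi with hi | ⟨j, hj, rfl⟩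
  · obtain ⟨hik, hocc⟩ := mem_coccSet.1 hi
    exact mem_coccSet.2 ⟨by omega, (occursAt_dsum_left τ σ hik).2 hocc⟩
  · obtain ⟨hjk, hocc⟩ := mem_coccSet.1 hj
    exact mem_coccSet.2 ⟨by omega, (occursAt_dsum_right τ σ hjk).2 hocc⟩

theorem coccSet_dsum_subset :
    coccSet π (dsum τ σ) ⊆
      coccSet π τ ∪ (coccSet π σ).map (addLeftEmbedding m) ∪ Ico (m + 1 - k) m := by
  intro i hi
  obtain ⟨hik, hocc⟩ := mem_coccSet.1 hi
  simp only [mem_union, Finset.mem_map, addLeftEmbedding_apply, mem_Ico]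
  by_cases him : i + k ≤ m
  · exact .inl (.inl (mem_coccSet.2 ⟨him, (occursAt_dsum_left τ σ him).1 hocc⟩))
  by_cases hmi : m ≤ i
  · obtain ⟨j, rfl⟩ := Nat.exists_eq_add_of_le hmi
    refine .inl (.inr ⟨j, mem_coccSet.2 ⟨by omega, ?_⟩, rfl⟩)
    exact (occursAt_dsum_right τ σ (by omega)).1 hocc
  · exact .inr (by omega)

theorem cocc_dsum_le : cocc π (dsum τ σ) ≤ cocc π τ + cocc π σ + k := by
  rw [← card_coccSet, ← card_coccSet, ← card_coccSet]
  calc #(coccSet π (dsum τ σ))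
      ≤ #(coccSet π τ ∪ (coccSet π σ).map (addLeftEmbedding m)) + #(Ico (m + 1 - k) m) :=
        (card_le_card (coccSet_dsum_subset π τ σ)).trans (card_union_le _ _)
    _ ≤ #(coccSet π τ) + #(coccSet π σ) + k := by
        grw [card_union_le, card_map, Nat.card_Ico]
        omega

theorem cocc_add_cocc_le_cocc_dsum : cocc π τ + cocc π σ ≤ cocc π (dsum τ σ) + 1 := by
  rw [← card_coccSet, ← card_coccSet, ← card_coccSet,
    ← card_map (addLeftEmbedding m) (s := coccSet π σ), ← card_union_add_card_inter]
  -- A window inside `τ` and a shifted window of `σ` coincide only at `m`, and only when `k = 0`.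
  have hinter : coccSet π τ ∩ (coccSet π σ).map (addLeftEmbedding m) ⊆ {m} := by
    intro i hi
    simp only [mem_inter, Finset.mem_map, addLeftEmbedding_apply] at hi
    obtain ⟨hiτ, j, -, rfl⟩ := hi
    have := (mem_coccSet.1 hiτ).1
    rw [mem_singleton]
    omega
  gcongr
  · exact coccSet_union_subset_coccSet_dsum π τ σ
  · simpa using card_le_card hinter

end DirectSum

def dsumPow (σ : Equiv.Perm (Fin n)) : (a : ℕ) → Equiv.Perm (Fin (n * a))
  | 0 => 1
  | a + 1 => dsum (dsumPow σ a) σ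

section DirectSumPow

variable (π : Equiv.Perm (Fin k)) (σ : Equiv.Perm (Fin n))

theorem cocc_dsumPow_le (a : ℕ) : cocc π (dsumPow σ a) ≤ a * (cocc π σ + k) + 1 := by
  induction a with
  | zero => simpa using cocc_le π (dsumPow σ 0)
  | succ a ih =>
    have := cocc_dsum_le π (dsumPow σ a) σ
    rw [dsumPow]
    nlinarith

theorem mul_cocc_le_cocc_dsumPow (a : ℕ) : a * cocc π σ ≤ cocc π (dsumPow σ a) + a := by
  induction a with
  | zero => simp
  | succ a ih =>
    have := cocc_add_cocc_le_cocc_dsum π (dsumPow σ a) σ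
    rw [dsumPow]
    nlinarith

end DirectSumPow

theorem abs_cocc_dsum_dsumPow_sub_le (π : Equiv.Perm (Fin k)) (σ : Equiv.Perm (Fin n))
    (τ : Equiv.Perm (Fin m)) (a b : ℕ) :
    |(cocc π (dsum (dsumPow σ a) (dsumPow τ b)) : ℝ) - (a * cocc π σ + b * cocc π τ)| ≤
      (a + b + 2) * (k + 1) := by
  have hσ₁ := cocc_dsumPow_le π σ a
  have hσ₂ := mul_cocc_le_cocc_dsumPow π σ a
  have hτ₁ := cocc_dsumPow_le π τ b
  have hτ₂ := mul_cocc_le_cocc_dsumPow π τ b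
  have h₁ := cocc_dsum_le π (dsumPow σ a) (dsumPow τ b)
  have h₂ := cocc_add_cocc_le_cocc_dsum π (dsumPow σ a) (dsumPow τ b)
  have hU : cocc π (dsum (dsumPow σ a) (dsumPow τ b)) ≤
      a * cocc π σ + b * cocc π τ + (a + b + 2) * (k + 1) := by nlinarith
  have hL : a * cocc π σ + b * cocc π τ ≤
      cocc π (dsum (dsumPow σ a) (dsumPow τ b)) + (a + b + 2) * (k + 1) := by nlinarith
  rw [abs_sub_le_iff, sub_le_iff_le_add', sub_le_iff_le_add']
  exact ⟨by exact_mod_cast hU, by exact_mod_cast hL⟩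

end Combinatorics

open Topology

variable {k : ℕ}

theorem tendsto_natCast_inv_of_tendsto_atTop {N : ℕ → ℕ} (hN : Tendsto N atTop atTop) :
    Tendsto (fun m => (N m : ℝ)⁻¹) atTop (𝓝 0) :=
  (tendsto_natCast_atTop_atTop.comp hN).inv_tendsto_atTop

theorem abs_mix_sub_cocc_div_le (π : Equiv.Perm (Fin k)) {n n' : ℕ} (σ : Equiv.Perm (Fin n))
    (τ : Equiv.Perm (Fin n')) {p m : ℕ} (hpm : p ≤ m) (hm : 1 ≤ m) (hn : 1 ≤ n) (hn' : 1 ≤ n') :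
    |(p / m : ℝ) * (cocc π σ / n) + (1 - p / m) * (cocc π τ / n') -
        cocc π (dsum (dsumPow σ (p * n')) (dsumPow τ ((m - p) * n))) /
          ((n * (p * n') + n' * ((m - p) * n) : ℕ) : ℝ)| ≤
      (k + 1) * ((n : ℝ)⁻¹ + (n' : ℝ)⁻¹ + 2 * (m : ℝ)⁻¹) := by
  have hsize : ((n * (p * n') + n' * ((m - p) * n) : ℕ) : ℝ) = m * n * n' := by
    push_cast [hpm]; ring
  have hslack : ((p * n' + (m - p) * n + 2 : ℕ) : ℝ) ≤ m * n' + m * n + 2 * n * n' := by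
    have : p * n' + (m - p) * n + 2 ≤ m * n' + m * n + 2 * n * n' := by
      have := Nat.mul_le_mul hn hn'
      gcongr
      · exact Nat.sub_le m p
      · rw [mul_assoc]; omega
    exact_mod_cast this
  have key := abs_cocc_dsum_dsumPow_sub_le π σ τ (p * n') ((m - p) * n)
  have hm₀ : (0 : ℝ) < m := by exact_mod_cast hm
  have hn₀ : (0 : ℝ) < n := by exact_mod_cast hn
  have hn'₀ : (0 : ℝ) < n' := by exact_mod_cast hn'
  rw [hsize]
  calc _ = |((cocc π (dsum (dsumPow σ (p * n')) (dsumPow τ ((m - p) * n))) : ℝ) -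
          ((p * n' : ℕ) * cocc π σ + ((m - p) * n : ℕ) * cocc π τ)) / (m * n * n')| := by
        rw [abs_sub_comm]
        congr 1
        push_cast [hpm]
        field_simp
    _ = |(cocc π (dsum (dsumPow σ (p * n')) (dsumPow τ ((m - p) * n))) : ℝ) -
          ((p * n' : ℕ) * cocc π σ + ((m - p) * n : ℕ) * cocc π τ)| / (m * n * n') := by
        rw [abs_div, abs_of_pos (by positivity : (0 : ℝ) < m * n * n')]
    _ ≤ ((p * n' : ℕ) + ((m - p) * n : ℕ) + 2) * (k + 1) / (m * n * n') := by gcongr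
    _ ≤ _ := by
        rw [div_le_iff₀ (by positivity), mul_comm,
          show (k + 1) * ((n : ℝ)⁻¹ + (n' : ℝ)⁻¹ + 2 * (m : ℝ)⁻¹) * (m * n * n') =
            (k + 1) * (m * n' + m * n + 2 * n * n') by field_simp]
        exact mul_le_mul_of_nonneg_left (by exact_mod_cast hslack) (by positivity)

theorem smul_add_one_sub_smul_mem_feasibleRegion {v w : Equiv.Perm (Fin k) → ℝ}
    (hv : v ∈ feasibleRegion k) (hw : w ∈ feasibleRegion k) {θ : ℝ} (hθ₀ : 0 ≤ θ) (hθ₁ : θ ≤ 1) :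
    θ • v + (1 - θ) • w ∈ feasibleRegion k := by
  obtain ⟨n, σ, hn, hσ⟩ := hv
  obtain ⟨n', τ, hn', hτ⟩ := hw
  set p : ℕ → ℕ := fun m => ⌊θ * m⌋₊
  have hpm (m : ℕ) : p m ≤ m :=
    Nat.floor_le_of_le (mul_le_of_le_one_left (Nat.cast_nonneg m) hθ₁)
  have hp : Tendsto (fun m : ℕ => (p m : ℝ) / m) atTop (𝓝 θ) :=
    (tendsto_nat_floor_mul_div_atTop hθ₀).comp tendsto_natCast_atTop_atTop
  have hsize (m : ℕ) : n m * (p m * n' m) + n' m * ((m - p m) * n m) = m * (n m * n' m) := by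
    zify [hpm m]; ring
  refine ⟨fun m => n m * (p m * n' m) + n' m * ((m - p m) * n m),
    fun m => dsum (dsumPow (σ m) (p m * n' m)) (dsumPow (τ m) ((m - p m) * n m)), ?_, fun π => ?_⟩
  · simpa only [hsize, id_eq] using tendsto_id.atTop_mul_atTop₀ (hn.atTop_mul_atTop₀ hn')
  have hmix : Tendsto (fun m => (p m / m : ℝ) * (cocc π (σ m) / n m) +
      (1 - p m / m) * (cocc π (τ m) / n' m)) atTop (𝓝 ((θ • v + (1 - θ) • w) π)) :=
    (hp.mul (hσ π)).add ((tendsto_const_nhds.sub hp).mul (hτ π))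
  have herr : Tendsto (fun m : ℕ => (k + 1) * ((n m : ℝ)⁻¹ + (n' m : ℝ)⁻¹ + 2 * (m : ℝ)⁻¹))
      atTop (𝓝 0) := by
    simpa using tendsto_const_nhds.mul (((tendsto_natCast_inv_of_tendsto_atTop hn).add
      (tendsto_natCast_inv_of_tendsto_atTop hn')).add
      (tendsto_const_nhds.mul (tendsto_natCast_inv_of_tendsto_atTop tendsto_id)))
  refine hmix.congr_dist (squeeze_zero' (.of_forall fun m => dist_nonneg) ?_ herr)
  filter_upwards [hn.eventually_ge_atTop 1, hn'.eventually_ge_atTop 1, eventually_ge_atTop 1]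
    with m hnm hn'm hm
  exact abs_mix_sub_cocc_div_le π (σ m) (τ m) (hpm m) hm hnm hn'm

theorem mem_Icc_of_mem_feasibleRegion {v : Equiv.Perm (Fin k) → ℝ} (hv : v ∈ feasibleRegion k)
    (π : Equiv.Perm (Fin k)) : v π ∈ Set.Icc (0 : ℝ) 1 := by
  obtain ⟨N, σ, hN, hσ⟩ := hv
  refine ⟨ge_of_tendsto' (hσ π) fun m => by positivity, le_of_tendsto_of_tendsto' (hσ π)
    (by simpa using tendsto_const_nhds.add (tendsto_natCast_inv_of_tendsto_atTop hN)) fun m => ?_⟩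
  show (cocc π (σ m) : ℝ) / N m ≤ 1 + (N m : ℝ)⁻¹
  rcases Nat.eq_zero_or_pos (N m) with h | h
  · simp [h]
  · rw [div_le_iff₀ (by positivity), add_mul, inv_mul_cancel₀ (by positivity), one_mul]
    exact_mod_cast cocc_le π (σ m)

end ConsecutivePattern

open ConsecutivePattern in
/-- The feasible region `P_k` for consecutive patterns is a convex subset of `[0,1]^{S_k}`. -/
theorem feasibleRegion_convex (k : ℕ) :
    Convex ℝ (feasibleRegion k) ∧
      ∀ v ∈ feasibleRegion k, ∀ π : Equiv.Perm (Fin k), v π ∈ Set.Icc (0 : ℝ) 1 := by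
  refine ⟨fun v hv w hw θ μ hθ _ hθμ => ?_, fun v hv => mem_Icc_of_mem_feasibleRegion hv⟩
  obtain rfl : μ = 1 - θ := by linarith
  exact smul_add_one_sub_smul_mem_feasibleRegion hv hw hθ (by linarith)
end

section
/- For every permutation σ of size n ≥ k and every pattern τ ∈ S_{k−1}, the number of consecutive occurrences of τ in σ differs from the sum over all π ∈ S_k whose first k−1 entries induce the pattern τ of cocc(π,σ) by at most 1. (The flow-balance relations of the overlap graph.) -/
/-! The `n - k` windows of `k + 1` consecutive entries of `σ` each have exactly one pattern `π`,
and the first `k` entries of such a window are an occurrence of `firstPat π`. Hence the sum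
counts the occurrences of `τ` starting at positions `0, …, n - k - 1`, while `cocc τ σ` may in
addition count the one starting at position `n - k`. -/

open Filter Finset

/-- The pattern of a tuple of distinct values: the unique permutation in the same
relative order. -/
def patOf {j : ℕ} (f : Fin j → ℕ) : Equiv.Perm (Fin j) := (Tuple.sort f)⁻¹

/-- The pattern induced by the first `k` entries of a permutation of size `k+1`.
In the overlap graph `Ov(k+1)` this is the source of the edge labeled `π`. -/
def firstPat {k : ℕ} (π : Equiv.Perm (Fin (k + 1))) : Equiv.Perm (Fin k) :=
  patOf (fun i => (π i.castSucc : ℕ))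

/-- The pattern induced by the last `k` entries of a permutation of size `k+1`.
In the overlap graph `Ov(k+1)` this is the target of the edge labeled `π`. -/
def lastPat {k : ℕ} (π : Equiv.Perm (Fin (k + 1))) : Equiv.Perm (Fin k) :=
  patOf (fun i => (π i.succ : ℕ))

lemma patOf_lt_patOf_iff {j : ℕ} {f : Fin j → ℕ} (hf : Function.Injective f) (a b : Fin j) :
    patOf f a < patOf f b ↔ f a < f b := by
  have hmono : StrictMono (f ∘ Tuple.sort f) :=
    (Tuple.monotone_sort f).strictMono_of_injective (hf.comp (Tuple.sort f).injective)
  have hf_eq (c : Fin j) : f c = (f ∘ Tuple.sort f) (patOf f c) := by simp [patOf]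
  rw [hf_eq a, hf_eq b, hmono.lt_iff_lt]

lemma eq_patOf_iff {j : ℕ} {f : Fin j → ℕ} (hf : Function.Injective f) (π : Equiv.Perm (Fin j)) :
    π = patOf f ↔ ∀ a b, π a < π b ↔ f a < f b := by
  refine ⟨fun h => h ▸ patOf_lt_patOf_iff hf, fun h => ?_⟩
  have hsort : π⁻¹ = Tuple.sort f := by
    refine Tuple.eq_sort_iff.2 ⟨StrictMono.monotone fun a b hab => ?_,
      fun a b hab hfab => absurd (π⁻¹.injective (hf hfab)) hab.ne⟩
    simpa using (h (π⁻¹ a) (π⁻¹ b)).1 (by simpa using hab)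
  rw [patOf, ← hsort, inv_inv]

lemma firstPat_patOf {k : ℕ} {f : Fin (k + 1) → ℕ} (hf : Function.Injective f) :
    firstPat (patOf f) = patOf (fun a => f a.castSucc) := by
  have hf' : Function.Injective fun a : Fin k => f a.castSucc := hf.comp (Fin.castSucc_injective k)
  refine (eq_patOf_iff hf' _).2 fun a b => ?_
  have hfirst : Function.Injective fun a : Fin k => (patOf f a.castSucc : ℕ) :=
    Fin.val_injective.comp ((patOf f).injective.comp (Fin.castSucc_injective k))
  rw [firstPat, patOf_lt_patOf_iff hfirst, Fin.val_fin_lt, patOf_lt_patOf_iff hf]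

def window {n : ℕ} (σ : Equiv.Perm (Fin n)) (j i : ℕ) : Fin j → ℕ :=
  fun a => papp σ (i + a)

lemma window_injective {j n : ℕ} (σ : Equiv.Perm (Fin n)) {i : ℕ} (h : i + j ≤ n) :
    Function.Injective (window σ j i) := by
  intro a b hab
  have ha : i + a < n := by omega
  have hb : i + b < n := by omega
  simp only [window, papp, dif_pos ha, dif_pos hb, Fin.val_inj, σ.injective.eq_iff,
    Fin.mk.injEq, Nat.add_left_cancel_iff] at hab
  exact hab

lemma cocc_eq_card_filter {k n : ℕ} (π : Equiv.Perm (Fin k)) (σ : Equiv.Perm (Fin n)) :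
    cocc π σ = #{i ∈ range (n + 1 - k) | patOf (window σ k i) = π} := by
  refine congrArg card (filter_congr fun i hi => ?_)
  rw [eq_comm, eq_patOf_iff (window_injective σ (by simp at hi; omega))]
  rfl

lemma sum_card_filter_eq_card_filter_comp {ι α β : Type*} [Fintype α] [DecidableEq α] [DecidableEq β]
    (s : Finset ι) (f : ι → α) (g : α → β) (b : β) :
    ∑ a ∈ univ.filter (g · = b), #{i ∈ s | f i = a} = #{i ∈ s | g (f i) = b} := by
  rw [card_eq_sum_card_fiberwise (f := f) (t := univ.filter (g · = b))
    fun i hi => by simp_all]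
  refine sum_congr rfl fun a ha => ?_
  rw [filter_filter]
  refine congrArg card (filter_congr fun i _ => ?_)
  simp only [mem_filter, mem_univ, true_and] at ha
  exact ⟨fun h => ⟨h ▸ ha, h⟩, And.right⟩

lemma card_filter_range_le_add_one (p : ℕ → Prop) [DecidablePred p] {m m' : ℕ}
    (h : m' ≤ m + 1) : #{i ∈ range m' | p i} ≤ #{i ∈ range m | p i} + 1 :=
  calc #{i ∈ range m' | p i}
      ≤ #{i ∈ range (m + 1) | p i} := card_le_card (filter_subset_filter _ (range_mono h))
    _ ≤ #{i ∈ range m | p i} + 1 := by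
      rw [range_add_one, filter_insert]
      split_ifs
      exacts [card_insert_le _ _, Nat.le_succ _]

lemma firstPat_patOf_window {k n : ℕ} (σ : Equiv.Perm (Fin n)) {i : ℕ} (h : i + (k + 1) ≤ n) :
    firstPat (patOf (window σ (k + 1) i)) = patOf (window σ k i) :=
  firstPat_patOf (window_injective σ h)

theorem flow_balance_general {k n : ℕ} (σ : Equiv.Perm (Fin n))
    (τ : Equiv.Perm (Fin k)) :
    |(cocc τ σ : ℤ) -
        ∑ π ∈ Finset.univ.filter (fun π : Equiv.Perm (Fin (k + 1)) => firstPat π = τ),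
          (cocc π σ : ℤ)| ≤ 1 := by
  set occ : ℕ → ℕ := fun m => #{i ∈ range m | patOf (window σ k i) = τ}
  have hsum : ∑ π ∈ univ.filter (firstPat · = τ), cocc π σ = occ (n - k) := by
    simp_rw [cocc_eq_card_filter, Nat.add_sub_add_right, sum_card_filter_eq_card_filter_comp]
    refine congrArg card (filter_congr fun i hi => ?_)
    rw [firstPat_patOf_window σ (by simp at hi; omega)]
  have hτ : cocc τ σ = occ (n + 1 - k) := cocc_eq_card_filter τ σ
  have hlow : occ (n - k) ≤ occ (n + 1 - k) :=
    card_le_card (filter_subset_filter _ (range_mono (by omega)))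
  have hhigh : occ (n + 1 - k) ≤ occ (n - k) + 1 := card_filter_range_le_add_one _ (by omega)
  rw [← Nat.cast_sum, hsum, hτ, abs_sub_le_iff]
  omega

/-- Flow-balance: for `σ` of size `n ≥ k+1` and a pattern `τ` of size `k`, the number of
consecutive occurrences of `τ` in `σ` differs by at most `1` from the sum, over all patterns
`π` of size `k+1` whose first `k` entries induce `τ`, of `cocc(π,σ)`. -/
theorem flow_balance {k n : ℕ} (hn : k + 1 ≤ n) (σ : Equiv.Perm (Fin n))
    (τ : Equiv.Perm (Fin k)) :
    |(cocc τ σ : ℤ) -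
        ∑ π ∈ Finset.univ.filter (fun π : Equiv.Perm (Fin (k + 1)) => firstPat π = τ),
          (cocc π σ : ℤ)| ≤ 1 :=
  flow_balance_general σ τ
end

section
/- The overlap graph Ov(k) admits an Eulerian circuit, i.e., a closed directed walk using every edge exactly once. -/
open Filter Finset
/-!
A longest trail in a balanced directed multigraph is closed: a trail ending at a vertex `b`
other than its start has used one more edge into `b` than out of `b`, so some unused edge
leaves `b` and extends it. If a longest closed trail missed an edge, strong connectivity would
give an unused edge `g` leaving a vertex of the trail; rotating the trail so that it ends at
the source of `g` and appending `g` would give a longer trail.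

`Ov(k+1)` is balanced because `π ↦ π * finRotate` sends the edges into `v` bijectively onto the
edges out of `v`, and strongly connected because the consecutive `k`-windows of the word `u`
followed by a shifted copy of `v` form a walk from `u` to `v`.
-/

theorem Cycle.chain_coe_iff {α : Type*} {r : α → α → Prop} {l : List α} (hl : l ≠ []) :
    Cycle.Chain r (l : Cycle α) ↔ l.IsChain r ∧ r (l.getLast hl) (l.head hl) := by
  rw [Cycle.chain_ne_nil r hl]
  obtain ⟨a, l, rfl⟩ := List.exists_cons_of_ne_nil hl
  rw [List.isChain_cons_cons, and_comm]
  rfl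

theorem List.Nodup.count_map_eq_card_filter {E V : Type*} [DecidableEq E] [DecidableEq V]
    {w : List E} (hw : w.Nodup) (f : E → V) (b : V) :
    (w.map f).count b = #{e ∈ w.toFinset | f e = b} := by
  induction w with
  | nil => simp
  | cons a l ih =>
    rw [List.nodup_cons] at hw
    rw [List.map_cons, List.count_cons, ih hw.2, List.toFinset_cons, filter_insert]
    split_ifs with h1 h2 h2 <;> simp_all

section EulerianCircuit

variable {E V : Type*} (s t : E → V)

def IsTrail (w : List E) : Prop := w.IsChain (fun a b => t a = s b) ∧ w.Nodup

variable {s t}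

theorem source_cons_map_target {e : E} {w : List E}
    (h : (e :: w).IsChain (fun a b => t a = s b)) :
    s e :: (e :: w).map t = (e :: w).map s ++ [t ((e :: w).getLast (List.cons_ne_nil e w))] := by
  induction w generalizing e with
  | nil => rfl
  | cons e' w ih =>
    obtain ⟨he, hw⟩ := List.isChain_cons_cons.1 h
    rw [List.map_cons, List.getLast_cons_cons, he, ih hw]
    rfl

theorem map_target_perm_map_source {w : List E}
    (hw : Cycle.Chain (fun a b => t a = s b) (w : Cycle E)) : (w.map t).Perm (w.map s) := by
  rcases w with _ | ⟨e, l⟩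
  · rfl
  obtain ⟨hchain, hclosed⟩ := (Cycle.chain_coe_iff (List.cons_ne_nil e l)).1 hw
  have h := source_cons_map_target hchain
  rw [hclosed, List.head_cons] at h
  exact List.Perm.cons_inv (a := s e) (by rw [h]; exact List.perm_append_singleton _ _)

theorem IsTrail.append_singleton {w : List E} {e : E} (hw : IsTrail s t w) (he : e ∉ w)
    (hlast : ∀ g ∈ w.getLast?, t g = s e) : IsTrail s t (w ++ [e]) :=
  ⟨List.isChain_append.2 ⟨hw.1, List.isChain_singleton e, by simpa using hlast⟩,
    List.nodup_append.2 ⟨hw.2, List.nodup_singleton e,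
      fun _ ha _ hb hab => he (List.mem_singleton.1 hb ▸ hab ▸ ha)⟩⟩

theorem exists_longest_trail [Fintype E] :
    ∃ w, IsTrail s t w ∧ ∀ w', IsTrail s t w' → w'.length ≤ w.length :=
  Set.exists_max_image {w | IsTrail s t w} List.length
    ((List.finite_length_le E (Fintype.card E)).subset fun _ hw => hw.2.length_le_card)
    ⟨[], List.isChain_nil, List.nodup_nil⟩

theorem exists_unused_edge_of_cycle_chain
    (hconn : ∀ u v, Relation.ReflTransGen (fun a b => ∃ e, s e = a ∧ t e = b) u v)
    {w : List E} (hw : Cycle.Chain (fun a b => t a = s b) (w : Cycle E)) (hne : w ≠ [])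
    {e : E} (he : e ∉ w) : ∃ g ∉ w, s g ∈ w.map s := by
  by_contra! hall
  have hstep : ∀ {u v}, u ∈ w.map s → (∃ g, s g = u ∧ t g = v) → v ∈ w.map s := by
    rintro u v hu ⟨g, rfl, rfl⟩
    have hg : g ∈ w := by
      by_contra hg
      exact hall g hg hu
    exact (map_target_perm_map_source hw).subset (List.mem_map_of_mem hg)
  have hreach : ∀ v, Relation.ReflTransGen (fun a b => ∃ e, s e = a ∧ t e = b)
      (s (w.head hne)) v → v ∈ w.map s := by
    intro v h
    induction h with
    | refl => exact List.mem_map_of_mem (List.head_mem hne)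
    | tail _ hadj ih => exact hstep ih hadj
  exact hall e he (hreach _ (hconn _ _))

theorem IsTrail.exists_longer_of_cycle_chain {w : List E} (hw : IsTrail s t w)
    (hc : Cycle.Chain (fun a b => t a = s b) (w : Cycle E)) {g : E} (hg : g ∉ w)
    (hsg : s g ∈ w.map s) : ∃ w', IsTrail s t w' ∧ w'.length = w.length + 1 := by
  obtain ⟨f, hf, hfg⟩ := List.mem_map.1 hsg
  obtain ⟨w₁, w₂, rfl⟩ := List.append_of_mem hf
  have hrot : (w₁ ++ f :: w₂) ~r (f :: (w₂ ++ w₁)) := List.isRotated_append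
  rw [Cycle.coe_eq_coe.2 hrot, Cycle.chain_coe_iff (List.cons_ne_nil _ _)] at hc
  refine ⟨f :: (w₂ ++ w₁) ++ [g], IsTrail.append_singleton ⟨hc.1, hrot.nodup_iff.1 hw.2⟩
    (fun h => hg (hrot.mem_iff.2 h)) ?_, ?_⟩
  · simpa [List.getLast?_eq_some_getLast, hfg] using hc.2
  · simp only [List.length_append, List.length_cons, List.length_nil]
    omega

variable [Fintype E] [DecidableEq E] [DecidableEq V]

theorem IsTrail.exists_next_of_not_closed
    (hbal : ∀ v, #{e | s e = v} = #{e | t e = v}) {e : E} {l : List E}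
    (hw : IsTrail s t (e :: l)) (hopen : t ((e :: l).getLast (List.cons_ne_nil e l)) ≠ s e) :
    ∃ e' ∉ e :: l, s e' = t ((e :: l).getLast (List.cons_ne_nil e l)) := by
  set b := t ((e :: l).getLast (List.cons_ne_nil e l))
  have hcount := congrArg (List.count b) (source_cons_map_target hw.1)
  simp only [List.count_cons, List.count_append, List.count_nil, beq_iff_eq,
    if_neg (Ne.symm hopen), if_pos (show t _ = b from rfl), hw.2.count_map_eq_card_filter] at hcount
  have hin : #{e' ∈ (e :: l).toFinset | t e' = b} ≤ #{e' | t e' = b} :=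
    card_le_card (filter_subset_filter _ (subset_univ _))
  obtain ⟨e', he', hnot⟩ := exists_mem_notMem_of_card_lt_card
    (s := {e' ∈ (e :: l).toFinset | s e' = b}) (t := {e' | s e' = b}) (by rw [hbal]; omega)
  refine ⟨e', fun h => hnot ?_, (mem_filter.1 he').2⟩
  exact mem_filter.2 ⟨List.mem_toFinset.2 h, (mem_filter.1 he').2⟩

theorem IsTrail.cycle_chain_of_longest (hbal : ∀ v, #{e | s e = v} = #{e | t e = v})
    {w : List E} (hw : IsTrail s t w) (hne : w ≠ [])
    (hmax : ∀ w', IsTrail s t w' → w'.length ≤ w.length) :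
    Cycle.Chain (fun a b => t a = s b) (w : Cycle E) := by
  rw [Cycle.chain_coe_iff hne]
  refine ⟨hw.1, ?_⟩
  obtain ⟨e, l, rfl⟩ := List.exists_cons_of_ne_nil hne
  by_contra hopen
  obtain ⟨e', he', hs⟩ := hw.exists_next_of_not_closed hbal hopen
  have := hmax _ (hw.append_singleton he' (by simp [List.getLast?_eq_some_getLast, hs]))
  simp at this

theorem exists_eulerian_circuit [Nonempty E] (hbal : ∀ v, #{e | s e = v} = #{e | t e = v})
    (hconn : ∀ u v, Relation.ReflTransGen (fun a b => ∃ e, s e = a ∧ t e = b) u v) :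
    ∃ w : List E, w ≠ [] ∧ w.IsChain (fun a b => t a = s b) ∧
      w.getLast?.map t = w.head?.map s ∧ w.Nodup ∧ ∀ e, e ∈ w := by
  obtain ⟨w, hw, hmax⟩ := exists_longest_trail (s := s) (t := t)
  obtain ⟨e₀⟩ := ‹Nonempty E›
  have hne : w ≠ [] := by
    rintro rfl
    simpa using hmax [e₀] ⟨List.isChain_singleton e₀, List.nodup_singleton e₀⟩
  have hc := hw.cycle_chain_of_longest hbal hne hmax
  have hall : ∀ e, e ∈ w := by
    intro e
    by_contra he
    obtain ⟨g, hg, hsg⟩ := exists_unused_edge_of_cycle_chain hconn hc hne he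
    obtain ⟨w', hw', hlen⟩ := hw.exists_longer_of_cycle_chain hc hg hsg
    have := hmax w' hw'
    omega
  obtain ⟨hchain, hclosed⟩ := (Cycle.chain_coe_iff hne).1 hc
  refine ⟨w, hne, hchain, ?_, hw.2, hall⟩
  simp [List.getLast?_eq_some_getLast hne, List.head?_eq_some_head hne, hclosed]

end EulerianCircuit

theorem patOf_le_patOf_iff {j : ℕ} {f : Fin j → ℕ} (hf : Function.Injective f) (a b : Fin j) :
    patOf f a ≤ patOf f b ↔ f a ≤ f b := by
  have hmono : StrictMono (f ∘ Tuple.sort f) :=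
    (Tuple.monotone_sort f).strictMono_of_injective (hf.comp (Equiv.injective _))
  have hcancel : ∀ x, (f ∘ Tuple.sort f) (patOf f x) = f x := fun x => by simp [patOf]
  rw [← hmono.le_iff_le, hcancel, hcancel]

theorem patOf_eq_of_le_iff {j : ℕ} {f : Fin j → ℕ} (hf : Function.Injective f)
    {σ : Equiv.Perm (Fin j)} (hσ : ∀ a b, σ a ≤ σ b ↔ f a ≤ f b) : patOf f = σ := by
  rw [patOf, inv_eq_iff_eq_inv, eq_comm, Tuple.eq_sort_iff]
  refine ⟨fun a b hab => (hσ _ _).1 ?_,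
    fun a b hab heq => absurd (σ⁻¹.injective (hf heq)) hab.ne⟩
  simpa using hab

theorem patOf_val {j : ℕ} (σ : Equiv.Perm (Fin j)) : patOf (fun i => (σ i : ℕ)) = σ :=
  patOf_eq_of_le_iff (fun _ _ h => σ.injective (Fin.ext h)) fun _ _ => Fin.le_iff_val_le_val

theorem patOf_add_val {j : ℕ} (c : ℕ) (σ : Equiv.Perm (Fin j)) :
    patOf (fun i => c + (σ i : ℕ)) = σ :=
  patOf_eq_of_le_iff (fun _ _ h => σ.injective (Fin.ext (Nat.add_left_cancel h)))
    fun _ _ => Fin.le_iff_val_le_val.trans (Nat.add_le_add_iff_left).symm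

theorem patOf_patOf_comp {j m : ℕ} {g : Fin m → ℕ} (hg : Function.Injective g)
    {φ : Fin j → Fin m} (hφ : Function.Injective φ) :
    patOf (fun i => (patOf g (φ i) : ℕ)) = patOf (g ∘ φ) :=
  patOf_eq_of_le_iff (fun _ _ h => hφ ((patOf g).injective (Fin.ext h))) fun a b =>
    (patOf_le_patOf_iff (hg.comp hφ) a b).trans
      ((patOf_le_patOf_iff hg _ _).symm.trans Fin.le_iff_val_le_val)

theorem firstPat_mul_finRotate {k : ℕ} (π : Equiv.Perm (Fin (k + 1))) :
    firstPat (π * finRotate (k + 1)) = lastPat π := by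
  simp [firstPat, lastPat, finRotate_apply, Fin.coeSucc_eq_succ]

theorem card_firstPat_eq_card_lastPat {k : ℕ} (v : Equiv.Perm (Fin k)) :
    #{π : Equiv.Perm (Fin (k + 1)) | firstPat π = v} = #{π | lastPat π = v} :=
  card_equiv (Equiv.mulRight (finRotate (k + 1))⁻¹) fun π => by
    simp [← firstPat_mul_finRotate (π * (finRotate (k + 1))⁻¹)]

def windowPat (x : ℕ → ℕ) (k n : ℕ) : Equiv.Perm (Fin k) := patOf fun i => x (n + i)

theorem windowPat_reachable {x : ℕ → ℕ} (hx : Function.Injective x) (k n : ℕ) :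
    Relation.ReflTransGen
      (fun a b => ∃ π : Equiv.Perm (Fin (k + 1)), firstPat π = a ∧ lastPat π = b)
      (windowPat x k 0) (windowPat x k n) := by
  induction n with
  | zero => rfl
  | succ n ih =>
    have hinj : Function.Injective fun i : Fin (k + 1) => x (n + i) :=
      hx.comp ((add_right_injective n).comp Fin.val_injective)
    refine ih.tail ⟨windowPat x (k + 1) n, patOf_patOf_comp hinj (Fin.castSucc_injective k), ?_⟩
    rw [lastPat, windowPat, patOf_patOf_comp hinj (Fin.succ_injective k)]
    simp [windowPat, Function.comp_def, Nat.add_right_comm, Nat.add_assoc]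

/-- The permutation of `ℕ` whose first `2k` values are `u` followed by `v` shifted by `k`. -/
def concatPerm {k : ℕ} (u v : Equiv.Perm (Fin k)) : Equiv.Perm ℕ :=
  (finSumFinEquiv.permCongr (u.sumCongr v)).extendDomain Fin.equivSubtype

theorem concatPerm_apply_left {k : ℕ} (u v : Equiv.Perm (Fin k)) (i : Fin k) :
    concatPerm u v i = u i := by
  simpa [concatPerm] using Equiv.Perm.extendDomain_apply_image
    (finSumFinEquiv.permCongr (u.sumCongr v)) Fin.equivSubtype (Fin.castAdd k i)

theorem concatPerm_apply_right {k : ℕ} (u v : Equiv.Perm (Fin k)) (i : Fin k) :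
    concatPerm u v (k + i) = k + v i := by
  simpa [concatPerm, -Fin.natAdd_eq_addNat] using Equiv.Perm.extendDomain_apply_image
    (finSumFinEquiv.permCongr (u.sumCongr v)) Fin.equivSubtype (Fin.natAdd k i)

theorem overlap_reachable {k : ℕ} (u v : Equiv.Perm (Fin k)) :
    Relation.ReflTransGen
      (fun a b => ∃ π : Equiv.Perm (Fin (k + 1)), firstPat π = a ∧ lastPat π = b) u v := by
  simpa [windowPat, concatPerm_apply_left, concatPerm_apply_right, patOf_val, patOf_add_val] using
    windowPat_reachable (concatPerm u v).injective k k

/-- The overlap graph `Ov(k+1)` has an Eulerian circuit: a nonempty closed directed walk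
(a list of edges, i.e. of permutations in `S_{k+1}`, with the target vertex of each edge
equal to the source vertex of the next, and the target of the last equal to the source of
the first) using every edge exactly once. -/
theorem overlapGraph_eulerian (k : ℕ) :
    ∃ w : List (Equiv.Perm (Fin (k + 1))),
      w ≠ [] ∧
      w.Chain' (fun a b => lastPat a = firstPat b) ∧
      (w.getLast?.map lastPat) = (w.head?.map firstPat) ∧
      w.Nodup ∧
      ∀ π : Equiv.Perm (Fin (k + 1)), π ∈ w :=
  exists_eulerian_circuit card_firstPat_eq_card_lastPat overlap_reachable
end

section
/- Let G be a strongly connected directed multigraph with at least one edge. Then the cycle polytope P(G) = conv{ e_C : C simple cycle of G }, where (e_C)_e = (occurrences of e in C)/|C|, has dimension |E(G)| − |V(G)|. -/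
open Filter Finset

variable {V E : Type*}

/-- A (non-empty) closed directed walk in the directed multigraph with edge-source map `src`
and edge-target map `tgt`: a nonempty list of edges in which the target of each edge is the
source of the next, and the target of the last edge is the source of the first. -/
def IsCycleWalk (src tgt : E → V) (c : List E) : Prop :=
  c ≠ [] ∧ c.Chain' (fun a b => tgt a = src b) ∧ c.getLast?.map tgt = c.head?.map src

/-- A simple cycle: a closed directed walk that does not repeat vertices. -/
def IsSimpleCycle (src tgt : E → V) (c : List E) : Prop :=
  IsCycleWalk src tgt c ∧ (c.map src).Nodup

/-- The normalized incidence vector `e_C` of a cycle `C`: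
its coordinate at an edge `e` is (number of occurrences of `e` in `C`)/|C|. -/
noncomputable def cycleVec [DecidableEq E] (c : List E) : E → ℝ :=
  fun e => (c.count e : ℝ) / (c.length : ℝ)

/-- The cycle polytope of a directed multigraph: the convex hull of the normalized incidence
vectors of its simple cycles. -/
noncomputable def cyclePolytope [DecidableEq E] (src tgt : E → V) : Set (E → ℝ) :=
  convexHull ℝ { x | ∃ c, IsSimpleCycle src tgt c ∧ x = cycleVec c }


/-!
Let `∂ : ℝ^E → ℝ^V` be the boundary map `δₑ ↦ δ_{tgt e} - δ_{src e}`. The cycle vectors lie in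
`ker ∂` and have coordinate sum `1`, so the direction of their affine hull is their span cut by the
hyperplane `∑ₑ xₑ = 0`. Strong connectivity gives `range ∂ = {y | ∑ᵥ yᵥ = 0}`, hence
`dim ker ∂ = |E| - |V| + 1`, and it gives `span = ker ∂`. For the latter, the edge counts `χ` of a
closed walk split, at a repeated vertex, into those of two shorter closed walks, so they lie in the
span; and, with walks `p v` from a root to every vertex, a circulation `y` is
`∑ₑ yₑ (δₑ + χ(p (src e)) - χ(p (tgt e)))`, each summand being the difference of the edge counts
of the closed walks `p (src e), e, p' (tgt e)` and `p (tgt e), p' (tgt e)` for any walks `p' v`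
back to the root.
-/

section LinearAlgebra

theorem vectorSpan_eq_span_inf_ker {k M : Type*} [Ring k] [AddCommGroup M] [Module k M]
    {f : M →ₗ[k] k} {S : Set M} (hS : ∀ x ∈ S, f x = 1) :
    vectorSpan k S = Submodule.span k S ⊓ LinearMap.ker f := by
  apply le_antisymm
  · rw [vectorSpan_def, Submodule.span_le]
    rintro _ ⟨x, hx, y, hy, rfl⟩
    refine ⟨Submodule.sub_mem _ (Submodule.subset_span hx) (Submodule.subset_span hy), ?_⟩
    simp [hS x hx, hS y hy]
  · rintro y ⟨hy, hfy⟩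
    rcases S.eq_empty_or_nonempty with rfl | ⟨p, hp⟩
    · simp_all
    have key : ∀ z ∈ Submodule.span k S, z - f z • p ∈ vectorSpan k S := by
      intro z hz
      induction hz using Submodule.span_induction with
      | mem s hs => simpa [hS s hs] using vsub_mem_vectorSpan k hs hp
      | zero => simp
      | add x y _ _ hx hy =>
        convert Submodule.add_mem _ hx hy using 1
        simp only [map_add, add_smul]
        abel
      | smul a x _ hx =>
        convert Submodule.smul_mem _ a hx using 1
        simp [smul_sub, mul_smul]
    simpa [LinearMap.mem_ker.mp hfy] using key y hy

theorem finrank_inf_ker_add_one {K M : Type*} [Field K] [AddCommGroup M] [Module K M]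
    {W : Submodule K M} [FiniteDimensional K W] {f : M →ₗ[K] K} {x : M} (hxW : x ∈ W)
    (hfx : f x ≠ 0) :
    Module.finrank K ↥(W ⊓ LinearMap.ker f) + 1 = Module.finrank K W := by
  have hsurj : Function.Surjective (f.domRestrict W) := fun r =>
    ⟨(r / f x) • ⟨x, hxW⟩, by simp [hfx]⟩
  have := (f.domRestrict W).finrank_range_add_finrank_ker
  rw [LinearMap.range_eq_top.mpr hsurj, finrank_top, Module.finrank_self,
    LinearMap.ker_domRestrict, ← Submodule.finrank_map_subtype_eq,
    Submodule.map_comap_subtype] at this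
  omega

def coordSum (α : Type*) [Fintype α] : (α → ℝ) →ₗ[ℝ] ℝ :=
  Fintype.linearCombination ℝ fun _ => 1

@[simp]
theorem coordSum_apply {α : Type*} [Fintype α] (x : α → ℝ) : coordSum α x = ∑ a, x a := by
  simp [coordSum, Fintype.linearCombination_apply]

end LinearAlgebra

section Walks

variable (src tgt : E → V)

inductive IsWalk : V → List E → V → Prop
  | nil (u : V) : IsWalk u [] u
  | cons {e : E} {l : List E} {v : V} : IsWalk (tgt e) l v → IsWalk (src e) (e :: l) v

def IsStronglyConnected : Prop :=
  ∀ u v : V, Relation.ReflTransGen (fun a b => ∃ e, src e = a ∧ tgt e = b) u v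

variable {src tgt}

theorem isWalk_nil_iff {u v : V} : IsWalk src tgt u [] v ↔ u = v :=
  ⟨by rintro ⟨⟩; rfl, by rintro rfl; exact .nil u⟩

theorem isWalk_cons_iff {u v : V} {e : E} {l : List E} :
    IsWalk src tgt u (e :: l) v ↔ src e = u ∧ IsWalk src tgt (tgt e) l v :=
  ⟨by rintro ⟨⟩; exact ⟨rfl, ‹_›⟩, by rintro ⟨rfl, h⟩; exact .cons h⟩

theorem IsWalk.append {u w v : V} {l₁ l₂ : List E} (h₁ : IsWalk src tgt u l₁ w)
    (h₂ : IsWalk src tgt w l₂ v) : IsWalk src tgt u (l₁ ++ l₂) v := by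
  induction h₁ with
  | nil => exact h₂
  | cons _ ih => exact .cons (ih h₂)

theorem IsWalk.of_append {u v : V} {l₁ l₂ : List E} (h : IsWalk src tgt u (l₁ ++ l₂) v) :
    ∃ w, IsWalk src tgt u l₁ w ∧ IsWalk src tgt w l₂ v := by
  induction l₁ generalizing u with
  | nil => exact ⟨u, .nil u, h⟩
  | cons e l ih =>
    obtain ⟨rfl, ht⟩ := isWalk_cons_iff.mp h
    obtain ⟨w, h₁, h₂⟩ := ih ht
    exact ⟨w, .cons h₁, h₂⟩

theorem exists_isWalk_of_reflTransGen {u v : V}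
    (h : Relation.ReflTransGen (fun a b => ∃ e, src e = a ∧ tgt e = b) u v) :
    ∃ l, IsWalk src tgt u l v := by
  induction h with
  | refl => exact ⟨[], .nil _⟩
  | tail _ hstep ih =>
    obtain ⟨l, hl⟩ := ih
    obtain ⟨e, rfl, rfl⟩ := hstep
    exact ⟨l ++ [e], hl.append (.cons (.nil _))⟩

theorem isWalk_cons_iff_isChain {u v : V} {e : E} {l : List E} :
    IsWalk src tgt u (e :: l) v ↔
      src e = u ∧ (e :: l).IsChain (fun a b => tgt a = src b) ∧
        tgt ((e :: l).getLast (List.cons_ne_nil e l)) = v := by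
  induction l generalizing u e with
  | nil => simp [isWalk_cons_iff, isWalk_nil_iff]
  | cons e' l ih =>
    rw [isWalk_cons_iff, ih, List.isChain_cons_cons, List.getLast_cons (List.cons_ne_nil e' l)]
    grind

theorem isCycleWalk_cons_iff {e : E} {l : List E} :
    IsCycleWalk src tgt (e :: l) ↔ IsWalk src tgt (src e) (e :: l) (src e) := by
  rw [IsCycleWalk, isWalk_cons_iff_isChain, List.getLast?_eq_some_getLast (List.cons_ne_nil e l)]
  simp only [List.head?_cons, Option.map_some, Option.some_inj, true_and, ne_eq, reduceCtorEq,
    not_false_eq_true]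
  rfl -- `List.Chain'` is `List.IsChain`

theorem IsCycleWalk.isWalk {c : List E} (h : IsCycleWalk src tgt c) :
    ∃ u, IsWalk src tgt u c u := by
  obtain ⟨e, l, rfl⟩ := List.exists_cons_of_ne_nil h.1
  exact ⟨src e, isCycleWalk_cons_iff.mp h⟩

theorem IsWalk.isCycleWalk {u : V} {c : List E} (h : IsWalk src tgt u c u) (hc : c ≠ []) :
    IsCycleWalk src tgt c := by
  obtain ⟨e, l, rfl⟩ := List.exists_cons_of_ne_nil hc
  obtain ⟨rfl, -⟩ := isWalk_cons_iff.mp h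
  exact isCycleWalk_cons_iff.mpr h

end Walks

theorem List.exists_eq_append_cons_append_cons_of_not_nodup_map {α β : Type*} {g : α → β}
    {l : List α} (h : ¬ (l.map g).Nodup) :
    ∃ l₁ a l₂ b l₃, l = l₁ ++ a :: (l₂ ++ b :: l₃) ∧ g a = g b := by
  induction l with
  | nil => simp at h
  | cons a t ih =>
    rw [List.map_cons, List.nodup_cons, not_and_or, not_not] at h
    rcases h with hmem | ht
    · obtain ⟨b, hb, hab⟩ := List.mem_map.mp hmem
      obtain ⟨l₂, l₃, rfl⟩ := List.append_of_mem hb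
      exact ⟨[], a, l₂, b, l₃, rfl, hab.symm⟩
    · obtain ⟨l₁, a', l₂, b, l₃, rfl, hab⟩ := ih ht
      exact ⟨a :: l₁, a', l₂, b, l₃, rfl, hab⟩

section EdgeCount

variable [DecidableEq E]

def edgeCount (l : List E) : E → ℝ := fun e => (l.count e : ℝ)

@[simp]
theorem edgeCount_nil : edgeCount ([] : List E) = 0 := by
  ext; simp [edgeCount]

@[simp]
theorem edgeCount_cons (a : E) (l : List E) :
    edgeCount (a :: l) = Pi.single a 1 + edgeCount l := by
  ext e
  by_cases h : e = a
  · subst h; simp [edgeCount, add_comm]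
  · simp [edgeCount, h, Ne.symm h]

@[simp]
theorem edgeCount_append (l₁ l₂ : List E) :
    edgeCount (l₁ ++ l₂) = edgeCount l₁ + edgeCount l₂ := by
  induction l₁ with
  | nil => simp
  | cons a l ih => simp [ih, add_assoc]

theorem cycleVec_eq_inv_smul_edgeCount (c : List E) :
    cycleVec c = (c.length : ℝ)⁻¹ • edgeCount c := by
  ext e; simp [cycleVec, edgeCount, div_eq_inv_mul]

theorem edgeCount_eq_length_smul_cycleVec {c : List E} (hc : c ≠ []) :
    edgeCount c = (c.length : ℝ) • cycleVec c := by
  rw [cycleVec_eq_inv_smul_edgeCount, smul_inv_smul₀ (by simpa using hc)]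

end EdgeCount

def simpleCycleVecs [DecidableEq E] (src tgt : E → V) : Set (E → ℝ) :=
  {x | ∃ c, IsSimpleCycle src tgt c ∧ x = cycleVec c}

theorem IsWalk.edgeCount_mem_span_simpleCycleVecs [DecidableEq E] {src tgt : E → V} {u : V}
    {l : List E} (h : IsWalk src tgt u l u) :
    edgeCount l ∈ Submodule.span ℝ (simpleCycleVecs src tgt) := by
  induction hn : l.length using Nat.strong_induction_on generalizing u l with
  | _ n ih =>
  subst hn
  rcases eq_or_ne l [] with rfl | hne
  · simp
  by_cases hnd : (l.map src).Nodup
  · rw [edgeCount_eq_length_smul_cycleVec hne]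
    exact Submodule.smul_mem _ _ (Submodule.subset_span ⟨l, ⟨h.isCycleWalk hne, hnd⟩, rfl⟩)
  obtain ⟨l₁, a, l₂, b, l₃, rfl, hab⟩ :=
    List.exists_eq_append_cons_append_cons_of_not_nodup_map hnd
  obtain ⟨w, h₁, h₂₃⟩ := h.of_append
  obtain ⟨rfl, h₂₃'⟩ := isWalk_cons_iff.mp h₂₃
  obtain ⟨w', h₂, h₃⟩ := h₂₃'.of_append
  obtain ⟨rfl, h₃'⟩ := isWalk_cons_iff.mp h₃
  have hloop : IsWalk src tgt (src a) (a :: l₂) (src a) := .cons (hab ▸ h₂)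
  have hrest : IsWalk src tgt u (l₁ ++ b :: l₃) u := h₁.append (hab ▸ .cons h₃')
  have hsplit : edgeCount (l₁ ++ a :: (l₂ ++ b :: l₃))
      = edgeCount (a :: l₂) + edgeCount (l₁ ++ b :: l₃) := by
    simp only [edgeCount_append, edgeCount_cons]
    abel
  rw [hsplit]
  exact Submodule.add_mem _ (ih _ (by simp; omega) hloop rfl) (ih _ (by simp) hrest rfl)

section Boundary

variable [Fintype E] [DecidableEq E] [DecidableEq V] {src tgt : E → V}

variable (src tgt) in
def boundaryMap : (E → ℝ) →ₗ[ℝ] (V → ℝ) :=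
  Fintype.linearCombination ℝ fun e => Pi.single (tgt e) 1 - Pi.single (src e) 1

theorem boundaryMap_single (e : E) :
    boundaryMap src tgt (Pi.single e 1) = Pi.single (tgt e) 1 - Pi.single (src e) 1 := by
  simp [boundaryMap, Fintype.linearCombination_apply_single]

theorem IsWalk.boundaryMap_edgeCount {u v : V} {l : List E} (h : IsWalk src tgt u l v) :
    boundaryMap src tgt (edgeCount l) = Pi.single v 1 - Pi.single u 1 := by
  induction h with
  | nil => simp
  | cons _ ih =>
    rw [edgeCount_cons, map_add, boundaryMap_single, ih]
    abel

theorem coordSum_edgeCount (l : List E) : coordSum E (edgeCount l) = l.length := by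
  induction l with
  | nil => simp
  | cons a l ih => rw [edgeCount_cons, map_add, ih]; simp [add_comm]

theorem IsWalk.edgeCount_mem_ker_boundaryMap {u : V} {l : List E} (h : IsWalk src tgt u l u) :
    edgeCount l ∈ LinearMap.ker (boundaryMap src tgt) := by
  rw [LinearMap.mem_ker, h.boundaryMap_edgeCount, sub_self]

theorem IsCycleWalk.cycleVec_mem_ker_boundaryMap {c : List E} (h : IsCycleWalk src tgt c) :
    cycleVec c ∈ LinearMap.ker (boundaryMap src tgt) := by
  obtain ⟨u, hu⟩ := h.isWalk
  rw [cycleVec_eq_inv_smul_edgeCount]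
  exact Submodule.smul_mem _ _ hu.edgeCount_mem_ker_boundaryMap

theorem coordSum_cycleVec {c : List E} (hc : c ≠ []) : coordSum E (cycleVec c) = 1 := by
  rw [cycleVec_eq_inv_smul_edgeCount, map_smul, coordSum_edgeCount, smul_eq_mul,
    inv_mul_cancel₀ (by simpa using hc)]

end Boundary

section Rank

variable [Fintype V] [Fintype E] [DecidableEq V] {src tgt : E → V}

theorem range_boundaryMap (hconn : IsStronglyConnected src tgt) :
    LinearMap.range (boundaryMap src tgt) = LinearMap.ker (coordSum V) := by
  classical
  refine le_antisymm ?_ fun y hy => ?_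
  · rw [LinearMap.range_le_ker_iff]
    refine LinearMap.pi_ext' fun e => LinearMap.ext_ring ?_
    simp [boundaryMap_single]
  rcases isEmpty_or_nonempty V with _ | ⟨⟨r⟩⟩
  · simp [Subsingleton.elim y 0]
  have hpath (v : V) :
      Pi.single v 1 - Pi.single r 1 ∈ LinearMap.range (boundaryMap src tgt) := by
    obtain ⟨l, hl⟩ := exists_isWalk_of_reflTransGen (hconn r v)
    exact ⟨edgeCount l, hl.boundaryMap_edgeCount⟩
  have hy : ∑ v, y v = 0 := by simpa using hy
  have hrepr : y = ∑ v, y v • (Pi.single v 1 - Pi.single r 1) := by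
    simp only [smul_sub, Finset.sum_sub_distrib, ← Finset.sum_smul, hy, zero_smul, sub_zero]
    exact pi_eq_sum_univ' y
  rw [hrepr]
  exact Submodule.sum_mem _ fun v _ => Submodule.smul_mem _ _ (hpath v)

theorem finrank_ker_boundaryMap [Nonempty V] (hconn : IsStronglyConnected src tgt) :
    Module.finrank ℝ (LinearMap.ker (boundaryMap src tgt)) + Fintype.card V =
      Fintype.card E + 1 := by
  obtain ⟨r⟩ := ‹Nonempty V›
  have hrange := (boundaryMap src tgt).finrank_range_add_finrank_ker
  have hsum := finrank_inf_ker_add_one (f := coordSum V) (Submodule.mem_top (x := Pi.single r 1))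
    (by simp)
  rw [range_boundaryMap hconn, Module.finrank_fintype_fun_eq_card] at hrange
  rw [top_inf_eq, finrank_top, Module.finrank_fintype_fun_eq_card] at hsum
  omega

end Rank

section Span

variable [Fintype E] [DecidableEq E] [DecidableEq V] {src tgt : E → V}

theorem span_simpleCycleVecs_le_ker :
    Submodule.span ℝ (simpleCycleVecs src tgt) ≤ LinearMap.ker (boundaryMap src tgt) :=
  Submodule.span_le.mpr fun _ ⟨_, hc, hx⟩ => hx ▸ hc.1.cycleVec_mem_ker_boundaryMap

theorem ker_boundaryMap_le_span [Fintype V] (hconn : IsStronglyConnected src tgt) :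
    LinearMap.ker (boundaryMap src tgt) ≤ Submodule.span ℝ (simpleCycleVecs src tgt) := by
  intro y hy
  rcases isEmpty_or_nonempty V with _ | ⟨⟨r⟩⟩
  · have : IsEmpty E := src.isEmpty
    simp [Subsingleton.elim y 0]
  choose p hp using fun v => exists_isWalk_of_reflTransGen (hconn r v)
  choose p' hp' using fun v => exists_isWalk_of_reflTransGen (hconn v r)
  let Φ : (V → ℝ) →ₗ[ℝ] (E → ℝ) := Fintype.linearCombination ℝ fun v => edgeCount (p v)
  have hedge (e : E) :
      Pi.single e 1 - Φ (boundaryMap src tgt (Pi.single e 1)) ∈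
        Submodule.span ℝ (simpleCycleVecs src tgt) := by
    have h₁ := ((hp (src e)).append (.cons (hp' (tgt e)))).edgeCount_mem_span_simpleCycleVecs
    have h₂ := ((hp (tgt e)).append (hp' (tgt e))).edgeCount_mem_span_simpleCycleVecs
    convert Submodule.sub_mem _ h₁ h₂ using 1
    simp only [boundaryMap_single, map_sub, Φ, Fintype.linearCombination_apply_single, one_smul,
      edgeCount_append, edgeCount_cons]
    abel
  have hy : y = ∑ e, y e • (Pi.single e 1 - Φ (boundaryMap src tgt (Pi.single e 1))) := by
    simp only [smul_sub, Finset.sum_sub_distrib, ← map_smul, ← map_sum, ← pi_eq_sum_univ' y,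
      LinearMap.mem_ker.mp hy, map_zero, sub_zero]
  rw [hy]
  exact Submodule.sum_mem _ fun e _ => Submodule.smul_mem _ _ (hedge e)

theorem span_simpleCycleVecs [Fintype V] (hconn : IsStronglyConnected src tgt) :
    Submodule.span ℝ (simpleCycleVecs src tgt) = LinearMap.ker (boundaryMap src tgt) :=
  le_antisymm span_simpleCycleVecs_le_ker (ker_boundaryMap_le_span hconn)

theorem vectorSpan_simpleCycleVecs [Fintype V] (hconn : IsStronglyConnected src tgt) :
    vectorSpan ℝ (simpleCycleVecs src tgt) =
      LinearMap.ker (boundaryMap src tgt) ⊓ LinearMap.ker (coordSum E) := by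
  rw [← span_simpleCycleVecs hconn]
  exact vectorSpan_eq_span_inf_ker fun _ ⟨_, hc, hx⟩ => hx ▸ coordSum_cycleVec hc.1.1

end Span

theorem vectorSpan_cyclePolytope [DecidableEq E] (src tgt : E → V) :
    vectorSpan ℝ (cyclePolytope src tgt) = vectorSpan ℝ (simpleCycleVecs src tgt) := by
  rw [cyclePolytope, ← direction_affineSpan, affineSpan_convexHull, direction_affineSpan]
  rfl

/-- If a finite directed multigraph is strongly connected and has at least one edge, then its
cycle polytope has dimension `|E| − |V|` (dimension = rank of the direction of the affine
hull). -/
theorem cyclePolytope_dim_stronglyConnected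
    [Fintype V] [Fintype E] [DecidableEq E] (src tgt : E → V)
    (hconn : ∀ u v : V,
      Relation.ReflTransGen (fun a b => ∃ e, src e = a ∧ tgt e = b) u v)
    (hE : Nonempty E) :
    Module.finrank ℝ (vectorSpan ℝ (cyclePolytope src tgt))
      = Fintype.card E - Fintype.card V := by
  classical
  obtain ⟨e₀⟩ := hE
  have : Nonempty V := ⟨src e₀⟩
  obtain ⟨q, hq⟩ := exists_isWalk_of_reflTransGen (hconn (tgt e₀) (src e₀))
  have hcodim := finrank_inf_ker_add_one (f := coordSum E)
    (IsWalk.cons hq).edgeCount_mem_ker_boundaryMap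
    (by rw [coordSum_edgeCount, List.length_cons]; exact Nat.cast_ne_zero.mpr q.length.succ_ne_zero)
  have hker := finrank_ker_boundaryMap hconn
  rw [vectorSpan_cyclePolytope, vectorSpan_simpleCycleVecs hconn]
  omega
end

section
/- Let G be a directed multigraph and H ⊆ G a full subgraph. Then the set P(G)_H = { x ∈ P(G) : x_e = 0 for all e ∉ E(H) } equals the image of the cycle polytope P(H) under the canonical inclusion ℝ^{E(H)} ↪ ℝ^{E(G)}, and P(G)_H is a face of P(G). -/
open Filter Finset

variable {V E : Type*}

/-- A set of edges `S` is a full subgraph if every edge of `S` lies on a directed cycle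
using only edges of `S`. -/
def IsFullSubgraph (src tgt : E → V) (S : Set E) : Prop :=
  ∀ e ∈ S, ∃ c, IsCycleWalk src tgt c ∧ (∀ e' ∈ c, e' ∈ S) ∧ e ∈ c

/-- The cycle polytope of the subgraph with edge set `S`, viewed inside `ℝ^{E(G)}` via the
canonical inclusion `ℝ^{E(H)} ↪ ℝ^{E(G)}`: the convex hull of the normalized incidence
vectors of the simple cycles using only edges of `S`. -/
noncomputable def cyclePolytopeIn [DecidableEq E] (src tgt : E → V) (S : Set E) :
    Set (E → ℝ) :=
  convexHull ℝ { x | ∃ c, IsSimpleCycle src tgt c ∧ (∀ e ∈ c, e ∈ S) ∧ x = cycleVec c }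

lemma cycleVec_nonneg [DecidableEq E] (c : List E) (e : E) : 0 ≤ cycleVec c e :=
  div_nonneg (Nat.cast_nonneg _) (Nat.cast_nonneg _)

lemma mem_cyclePolytope_nonneg [DecidableEq E] (src tgt : E → V) {x : E → ℝ}
    (hx : x ∈ cyclePolytope src tgt) (e : E) : 0 ≤ x e := by
  have hsub : cyclePolytope src tgt ⊆ {y : E → ℝ | ∀ e, 0 ≤ y e} := by
    apply convexHull_min
    · rintro y ⟨c, _, rfl⟩ e
      exact cycleVec_nonneg c e
    · intro a ha b hb p q hp hq hpq e
      have := add_nonneg (mul_nonneg hp (ha e)) (mul_nonneg hq (hb e))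
      simpa [smul_eq_mul] using this
  exact hsub hx e

lemma convex_zeroSet (S : Set E) : Convex ℝ {x : E → ℝ | ∀ e ∉ S, x e = 0} := by
  intro a ha b hb p q hp hq hpq e he
  simp [smul_eq_mul, ha e he, hb e he]


lemma cycleVec_eq_zero_iff [DecidableEq E] {c : List E} (hc : c ≠ []) (e : E) :
    cycleVec c e = 0 ↔ e ∉ c := by
  have hlen : (c.length : ℝ) ≠ 0 :=
    Nat.cast_ne_zero.2 (fun h => hc (List.length_eq_zero_iff.1 h))
  rw [cycleVec, div_eq_zero_iff]
  simp [hlen, List.count_eq_zero]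

/-- For a full subgraph `H ⊆ G` with edge set `S`, the set
`P(G)_H = { x ∈ P(G) : x_e = 0 for e ∉ S }` equals the image of the cycle polytope `P(H)`
under the canonical inclusion `ℝ^{E(H)} ↪ ℝ^{E(G)}`, and `P(G)_H` is a
(possibly improper) exposed face of `P(G)`. -/
theorem cyclePolytope_face_of_fullSubgraph
    [Fintype E] [DecidableEq E] (src tgt : E → V) (S : Set E)
    (hS : IsFullSubgraph src tgt S) :
    { x ∈ cyclePolytope src tgt | ∀ e ∉ S, x e = 0 } = cyclePolytopeIn src tgt S ∧
      IsExposed ℝ (cyclePolytope src tgt)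
        { x ∈ cyclePolytope src tgt | ∀ e ∉ S, x e = 0 } := by
  classical
  constructor
  · apply Set.Subset.antisymm
    · -- P(G)_H ⊆ P(H)
      rintro x ⟨hxP, hx0⟩
      rw [cyclePolytope, _root_.convexHull_eq] at hxP
      obtain ⟨ι, t, w, z, hw₀, hw₁, hz, hcm⟩ := hxP
      set t' : Finset ι := {i ∈ t | w i ≠ 0} with ht'
      have hcm' : t'.centerMass w z = x := by
        rw [ht', Finset.centerMass_filter_ne_zero]; exact hcm
      have hws' : ∑ i ∈ t', w i = 1 := by
        rw [ht', Finset.sum_filter_ne_zero]; exact hw₁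
      have hznn : ∀ i ∈ t', ∀ e, 0 ≤ z i e := by
        intro i hi e
        obtain ⟨c, _, hzi⟩ := hz i (Finset.mem_filter.1 hi).1
        rw [hzi]; exact cycleVec_nonneg c e
      have hz0 : ∀ e ∉ S, ∀ i ∈ t', z i e = 0 := by
        intro e he
        have hxe : ∑ i ∈ t', w i * z i e = 0 := by
          have h0 := hx0 e he
          rw [← hcm'] at h0
          simpa [Finset.centerMass, hws', Finset.sum_apply, smul_eq_mul] using h0
        have hterm := (Finset.sum_eq_zero_iff_of_nonneg
          (fun i hi => mul_nonneg (hw₀ i (Finset.mem_filter.1 hi).1) (hznn i hi e))).1 hxe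
        intro i hi
        have hwi : w i ≠ 0 := (Finset.mem_filter.1 hi).2
        have := hterm i hi
        exact (mul_eq_zero.1 this).resolve_left hwi
      rw [cyclePolytopeIn, ← hcm']
      apply Finset.centerMass_mem_convexHull
      · exact fun i hi => hw₀ i (Finset.mem_filter.1 hi).1
      · rw [hws']; norm_num
      · intro i hi
        obtain ⟨c, hc, hzi⟩ := hz i (Finset.mem_filter.1 hi).1
        refine ⟨c, hc, fun e hec => ?_, hzi⟩
        by_contra heS
        have : z i e = 0 := hz0 e heS i hi
        rw [hzi] at this
        exact (cycleVec_eq_zero_iff hc.1.1 e).1 this hec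
    · -- P(H) ⊆ P(G)_H
      rw [cyclePolytopeIn]
      apply convexHull_min
      · rintro y ⟨c, hc, hcS, rfl⟩
        refine ⟨subset_convexHull ℝ _ ⟨c, hc, rfl⟩, fun e he => ?_⟩
        exact (cycleVec_eq_zero_iff hc.1.1 e).2 (fun hec => he (hcS e hec))
      · exact (convex_convexHull ℝ _).inter (convex_zeroSet S)
  · -- exposed face
    intro hB
    obtain ⟨x₀, hx₀A, hx₀0⟩ := hB
    set F : Finset E := Finset.univ.filter (· ∉ S) with hF
    refine ⟨-(∑ e ∈ F, ContinuousLinearMap.proj e), ?_⟩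
    have hl : ∀ y : E → ℝ, (-(∑ e ∈ F, ContinuousLinearMap.proj e) :
        (E → ℝ) →L[ℝ] ℝ) y = -(∑ e ∈ F, y e) := by
      intro y
      simp [ContinuousLinearMap.sum_apply]
    have hle : ∀ y ∈ cyclePolytope src tgt,
        (-(∑ e ∈ F, ContinuousLinearMap.proj e) : (E → ℝ) →L[ℝ] ℝ) y ≤ 0 := by
      intro y hy
      rw [hl]
      simp only [neg_nonpos]
      exact Finset.sum_nonneg fun e _ => mem_cyclePolytope_nonneg src tgt hy e
    have hx₀l : (-(∑ e ∈ F, ContinuousLinearMap.proj e) : (E → ℝ) →L[ℝ] ℝ) x₀ = 0 := by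
      rw [hl]
      simp only [neg_eq_zero]
      exact Finset.sum_eq_zero fun e he => hx₀0 e (by simpa [hF] using he)
    ext x
    simp only [Set.mem_setOf_eq, Set.mem_sep_iff]
    constructor
    · rintro ⟨hxA, hx0⟩
      refine ⟨hxA, fun y hy => ?_⟩
      have hxl : (-(∑ e ∈ F, ContinuousLinearMap.proj e) : (E → ℝ) →L[ℝ] ℝ) x = 0 := by
        rw [hl]
        simp only [neg_eq_zero]
        exact Finset.sum_eq_zero fun e he => hx0 e (by simpa [hF] using he)
      rw [hxl]
      exact hle y hy
    · rintro ⟨hxA, hmax⟩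
      refine ⟨hxA, fun e he => ?_⟩
      have h1 : (0 : ℝ) ≤ (-(∑ e ∈ F, ContinuousLinearMap.proj e) : (E → ℝ) →L[ℝ] ℝ) x :=
        hx₀l ▸ hmax x₀ hx₀A
      have h2 := hle x hxA
      have h3 : ∑ e ∈ F, x e = 0 := by
        have := le_antisymm h2 h1
        rw [hl] at this
        linarith
      have := (Finset.sum_eq_zero_iff_of_nonneg
        (fun e _ => mem_cyclePolytope_nonneg src tgt hxA e)).1 h3
      exact this e (by simp [hF, he])
end

section
/- For any v₁ ∈ P_k and v₂ ∈ clP_k there exists a single sequence of permutations σ^m with |σ^m| → ∞ such that simultaneously cocc(π,σ^m)/|σ^m| → (v₁)_π and occ(π,σ^m)/C(|σ^m|,k) → (v₂)_π for all π ∈ S_k. In other words, the mixed feasible region for (consecutive, classical) pattern densities of size k equals the product P_k × clP_k. -/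
open Filter Finset

/-- The number of (classical, not necessarily consecutive) occurrences of the pattern `π` in
`σ`: the number of strictly increasing tuples of `k` indices on which `σ` is in the same
relative order as `π`. -/
def occ {k n : ℕ} (π : Equiv.Perm (Fin k)) (σ : Equiv.Perm (Fin n)) : ℕ :=
  (Finset.univ.filter (fun f : Fin k → Fin n =>
    (∀ a b : Fin k, a < b → f a < f b) ∧
    ∀ a b : Fin k, π a < π b ↔ σ (f a) < σ (f b))).card

/-- The feasible region `clP_k` for classical patterns: limit points of the normalized
occurrence vectors `(occ(π,σ^m)/C(|σ^m|,k))_π` along sequences with sizes tending to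
infinity. -/
def classicalFeasibleRegion (k : ℕ) : Set (Equiv.Perm (Fin k) → ℝ) :=
  { v | ∃ (N : ℕ → ℕ) (σ : ∀ m, Equiv.Perm (Fin (N m))),
      Filter.Tendsto N Filter.atTop Filter.atTop ∧
      ∀ π : Equiv.Perm (Fin k),
        Filter.Tendsto (fun m => (occ π (σ m) : ℝ) / ((N m).choose k : ℝ))
          Filter.atTop (nhds (v π)) }

/-- The mixed feasible region: pairs of (consecutive, classical) limiting pattern densities
realized simultaneously by a single sequence of permutations. -/
def mixedFeasibleRegion (k : ℕ) :
    Set ((Equiv.Perm (Fin k) → ℝ) × (Equiv.Perm (Fin k) → ℝ)) :=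
  { p | ∃ (N : ℕ → ℕ) (σ : ∀ m, Equiv.Perm (Fin (N m))),
      Filter.Tendsto N Filter.atTop Filter.atTop ∧
      (∀ π : Equiv.Perm (Fin k),
        Filter.Tendsto (fun m => (cocc π (σ m) : ℝ) / (N m : ℝ))
          Filter.atTop (nhds (p.1 π))) ∧
      ∀ π : Equiv.Perm (Fin k),
        Filter.Tendsto (fun m => (occ π (σ m) : ℝ) / ((N m).choose k : ℝ))
          Filter.atTop (nhds (p.2 π)) }

def myInfl {n L : ℕ} (σ : Equiv.Perm (Fin n)) (τ : Equiv.Perm (Fin L)) :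
    Equiv.Perm (Fin (n * L)) :=
  finProdFinEquiv.permCongr (Equiv.prodCongr σ τ)

lemma block_lt {L a b c d : ℕ} (hb : b < L) (hd : d < L) :
    b + L * a < d + L * c ↔ a < c ∨ (a = c ∧ b < d) := by
  rcases Nat.lt_trichotomy a c with h | h | h
  · simp only [h, true_or, iff_true]
    calc b + L * a < L + L * a := by omega
    _ = L * (a+1) := by ring
    _ ≤ L * c := Nat.mul_le_mul_left L h
    _ ≤ d + L * c := by omega
  · subst h; omega
  · have : d + L * c < b + L * a := by
      calc d + L * c < L + L * c := by omega
      _ = L * (c+1) := by ring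
      _ ≤ L * a := Nat.mul_le_mul_left L h
      _ ≤ b + L * a := by omega
    omega

lemma myInfl_val {n L : ℕ} (σ : Equiv.Perm (Fin n)) (τ : Equiv.Perm (Fin L))
    (i : Fin n) (j : Fin L) (h : (j : ℕ) + L * (i : ℕ) < n * L) :
    ((myInfl σ τ) ⟨(j : ℕ) + L * (i : ℕ), h⟩ : ℕ) = (τ j : ℕ) + L * (σ i : ℕ) := by
  have : (⟨(j : ℕ) + L * (i : ℕ), h⟩ : Fin (n * L)) = finProdFinEquiv (i, j) := by
    simp [finProdFinEquiv]
  rw [this]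
  simp [myInfl, Equiv.permCongr_apply]

lemma papp_myInfl {n L : ℕ} (σ : Equiv.Perm (Fin n)) (τ : Equiv.Perm (Fin L))
    {i j : ℕ} (hi : i < n) (hj : j < L) :
    papp (myInfl σ τ) (i * L + j) = (τ ⟨j, hj⟩ : ℕ) + L * (σ ⟨i, hi⟩ : ℕ) := by
  have hlt : j + L * i < n * L := by
    calc j + L * i < L + L * i := by omega
    _ = (i+1) * L := by ring
    _ ≤ n * L := Nat.mul_le_mul_right L hi
  have he : i * L + j = j + L * i := by ring
  rw [papp, he, dif_pos hlt]
  exact myInfl_val σ τ ⟨i, hi⟩ ⟨j, hj⟩ hlt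

lemma cocc_myInfl {k n L : ℕ} (π : Equiv.Perm (Fin k)) (σ : Equiv.Perm (Fin n))
    (τ : Equiv.Perm (Fin L)) (hk : 1 ≤ k) (hkL : k ≤ L) :
    n * cocc π τ ≤ cocc π (myInfl σ τ) ∧
      cocc π (myInfl σ τ) ≤ n * cocc π τ + n * k := by
  classical
  set ρ := myInfl σ τ with hρ
  set Pρ : ℕ → Prop := fun s => ∀ a b : Fin k, π a < π b ↔ papp ρ (s + (a:ℕ)) < papp ρ (s + (b:ℕ))
    with hPρ
  set Pτ : ℕ → Prop := fun s => ∀ a b : Fin k, π a < π b ↔ papp τ (s + (a:ℕ)) < papp τ (s + (b:ℕ))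
    with hPτ
  have hT : cocc π ρ = ((Finset.range (n*L + 1 - k)).filter Pρ).card := rfl
  set T := (Finset.range (n*L + 1 - k)).filter Pρ with hTdef
  set e : ℕ × ℕ → ℕ := fun p => p.1 * L + p.2 with he
  set A : Finset (ℕ × ℕ) := (range n) ×ˢ (range (L + 1 - k)) with hA
  have ediv : ∀ (x y : ℕ), y < L → (x * L + y) / L = x := by
    intro x y hy
    rw [add_comm, Nat.add_mul_div_right _ _ (by omega : 0 < L), Nat.div_eq_of_lt hy, zero_add]
  have einj : Set.InjOn e ↑A := by
    intro p hp q hq hpq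
    simp only [hA, mem_coe, mem_product, mem_range] at hp hq
    have hp2 : p.2 < L := by omega
    have hq2 : q.2 < L := by omega
    simp only [he] at hpq
    have h1 : p.1 = q.1 := by
      have e1 := ediv p.1 p.2 hp2
      have e2 := ediv q.1 q.2 hq2
      rw [← hpq] at e2
      omega
    have h2 : p.2 = q.2 := by
      rw [h1] at hpq; omega
    exact Prod.ext h1 h2
  -- the window equivalence
  have hwin : ∀ i j : ℕ, i < n → j < L + 1 - k → (Pρ (e (i, j)) ↔ Pτ j) := by
    intro i j hi hj
    have hi' : i < n := hi
    have key : ∀ a : Fin k, papp ρ (e (i,j) + (a:ℕ)) = (τ ⟨j + a, by omega⟩ : ℕ) + L * (σ ⟨i, hi⟩ : ℕ) := by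
      intro a
      have ha : (a:ℕ) < k := a.2
      have : e (i,j) + (a:ℕ) = i * L + (j + a) := by simp only [he]; ring
      rw [this, papp_myInfl σ τ hi (by omega)]
    have keyτ : ∀ a : Fin k, papp τ (j + (a:ℕ)) = (τ ⟨j + a, by have := a.2; omega⟩ : ℕ) := by
      intro a
      have ha : (a:ℕ) < k := a.2
      rw [papp, dif_pos (by omega : j + (a:ℕ) < L)]
    constructor
    · intro h a b
      rw [h a b, key a, key b, keyτ a, keyτ b]
      omega
    · intro h a b
      rw [h a b, key a, key b, keyτ a, keyτ b]
      omega
  -- image membership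
  have himem : ∀ p ∈ A, e p ∈ range (n * L + 1 - k) := by
    intro p hp
    simp only [hA, mem_product, mem_range] at hp
    simp only [mem_range, he]
    have : p.1 * L + p.2 + k ≤ (p.1 + 1) * L := by
      have : p.2 + k ≤ L := by omega
      calc p.1 * L + p.2 + k ≤ p.1 * L + L := by omega
      _ = (p.1+1) * L := by ring
    have h2 : (p.1 + 1) * L ≤ n * L := Nat.mul_le_mul_right L (by omega)
    omega
  have hAfilter : (A.filter (fun p => Pτ p.2)) = (range n) ×ˢ ((range (L + 1 - k)).filter Pτ) := by
    rw [hA]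
    ext p
    simp only [Finset.mem_filter, Finset.mem_product]
    tauto
  have hAcard : (A.filter (fun p => Pτ p.2)).card = n * cocc π τ := by
    rw [hAfilter, Finset.card_product, Finset.card_range]; rfl
  -- lower bound
  have himg : (A.filter (fun p => Pτ p.2)).image e ⊆ T := by
    intro s hs
    simp only [Finset.mem_image] at hs
    obtain ⟨p, hp, rfl⟩ := hs
    simp only [Finset.mem_filter] at hp
    simp only [hTdef, Finset.mem_filter]
    refine ⟨himem p hp.1, ?_⟩
    have hp' := hp.1
    simp only [hA, mem_product, mem_range] at hp'
    exact (hwin p.1 p.2 hp'.1 hp'.2).2 hp.2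
  have hlow : n * cocc π τ ≤ cocc π ρ := by
    rw [hT, ← hAcard]
    calc (A.filter (fun p => Pτ p.2)).card
        = ((A.filter (fun p => Pτ p.2)).image e).card := by
          rw [Finset.card_image_of_injOn (einj.mono (Finset.coe_subset.2 (Finset.filter_subset _ _)))]
    _ ≤ T.card := Finset.card_le_card himg
  have hcardA : (A.image e).card = n * (L + 1 - k) := by
    rw [Finset.card_image_of_injOn einj, hA, Finset.card_product, Finset.card_range,
      Finset.card_range]
  have himsub : A.image e ⊆ range (n * L + 1 - k) := Finset.image_subset_iff.2 himem
  have hup : cocc π ρ ≤ n * cocc π τ + n * k := by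
    classical
    rw [hT]
    have hsplit := Finset.card_filter_add_card_filter_not
      (s := T) (p := fun s => s ∈ A.image e)
    have h1 : T.filter (fun s => s ∈ A.image e) ⊆ (A.filter (fun p => Pτ p.2)).image e := by
      intro s hs
      simp only [Finset.mem_filter] at hs
      have hsT := hs.1
      have hsi := hs.2
      rw [hTdef, Finset.mem_filter] at hsT
      rw [Finset.mem_image] at hsi
      obtain ⟨p, hpA, rfl⟩ := hsi
      have hp' := hpA
      simp only [hA, mem_product, mem_range] at hp'
      refine Finset.mem_image.2 ⟨p, Finset.mem_filter.2 ⟨hpA, ?_⟩, rfl⟩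
      exact (hwin p.1 p.2 hp'.1 hp'.2).1 hsT.2
    have hc1 : (T.filter (fun s => s ∈ A.image e)).card ≤ n * cocc π τ := by
      refine le_trans (Finset.card_le_card h1) ?_
      rw [Finset.card_image_of_injOn (einj.mono (Finset.coe_subset.2 (Finset.filter_subset _ _))),
        hAcard]
    have h2 : T.filter (fun s => s ∉ A.image e) ⊆ (range (n * L + 1 - k)) \ (A.image e) := by
      intro s hs
      simp only [Finset.mem_filter] at hs
      have hsT := hs.1
      rw [hTdef, Finset.mem_filter] at hsT
      exact Finset.mem_sdiff.2 ⟨hsT.1, hs.2⟩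
    have hc2 : (T.filter (fun s => s ∉ A.image e)).card ≤ n * k := by
      refine le_trans (Finset.card_le_card h2) ?_
      rw [Finset.card_sdiff_of_subset himsub, Finset.card_range, hcardA]
      have e1 : n * (L + 1 - k) + n * k = n * (L + 1) := by
        rw [← Nat.mul_add]; congr 1; omega
      have e2 : n * (L + 1) = n * L + n := by ring
      omega
    omega
  exact ⟨hlow, hup⟩

lemma card_strictMonoish (k N : ℕ) :
    ((Finset.univ : Finset (Fin k → Fin N)).filter
      (fun f => ∀ a b : Fin k, a < b → f a < f b)).card = N.choose k := by
  classical
  have : N.choose k = ((Finset.univ : Finset (Fin N)).powersetCard k).card := by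
    rw [Finset.card_powersetCard, Finset.card_univ, Fintype.card_fin]
  rw [this]
  refine Finset.card_bij (fun f _ => Finset.image f Finset.univ) ?_ ?_ ?_
  · intro f hf
    simp only [Finset.mem_filter] at hf
    have hsm : StrictMono f := fun a b h => hf.2 a b h
    rw [Finset.mem_powersetCard]
    exact ⟨Finset.subset_univ _,
      by rw [Finset.card_image_of_injective _ hsm.injective, Finset.card_univ, Fintype.card_fin]⟩
  · intro f hf g hg hfg
    simp only [Finset.mem_filter] at hf hg
    have hsmf : StrictMono f := fun a b h => hf.2 a b h
    have hsmg : StrictMono g := fun a b h => hg.2 a b h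
    have hcard : (Finset.image f Finset.univ).card = k := by
      rw [Finset.card_image_of_injective _ hsmf.injective, Finset.card_univ, Fintype.card_fin]
    have h1 := Finset.orderEmbOfFin_unique hcard
      (f := f) (fun x => Finset.mem_image_of_mem f (Finset.mem_univ x)) hsmf
    have hfg' : Finset.image f Finset.univ = Finset.image g Finset.univ := hfg
    have h2 := Finset.orderEmbOfFin_unique hcard
      (f := g) (fun x => hfg' ▸ Finset.mem_image_of_mem g (Finset.mem_univ x)) hsmg
    rw [h1, h2]
  · intro s hs
    rw [Finset.mem_powersetCard] at hs
    refine ⟨(s.orderEmbOfFin hs.2 : Fin k → Fin N), ?_, ?_⟩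
    · simp only [Finset.mem_filter]
      exact ⟨Finset.mem_univ _, fun a b h => (s.orderEmbOfFin hs.2).strictMono h⟩
    · apply Finset.coe_injective
      rw [Finset.coe_image, Finset.coe_univ, Set.image_univ, Finset.range_orderEmbOfFin]

lemma mydiv {L : ℕ} (hL : 0 < L) (x y : ℕ) (hy : y < L) : (x * L + y) / L = x := by
  rw [add_comm, Nat.add_mul_div_right _ _ hL, Nat.div_eq_of_lt hy, zero_add]

lemma mymod {L : ℕ} (x y : ℕ) (hy : y < L) : (x * L + y) % L = y := by
  rw [Nat.mul_add_mod', Nat.mod_eq_of_lt hy]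

def blk {n L : ℕ} (hL : 0 < L) (x : Fin (n * L)) : Fin n :=
  ⟨(x : ℕ) / L, by rw [Nat.div_lt_iff_lt_mul hL]; exact x.2⟩

def pos {n L : ℕ} (hL : 0 < L) (x : Fin (n * L)) : Fin L :=
  ⟨(x : ℕ) % L, Nat.mod_lt _ hL⟩

def cmb {n L : ℕ} (i : Fin n) (j : Fin L) : Fin (n * L) :=
  ⟨(i : ℕ) * L + (j : ℕ), by
    calc (i : ℕ) * L + (j : ℕ) < (i : ℕ) * L + L := by have := j.2; omega
    _ = ((i : ℕ) + 1) * L := by ring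
    _ ≤ n * L := Nat.mul_le_mul_right L i.2⟩

lemma blk_cmb {n L : ℕ} (hL : 0 < L) (i : Fin n) (j : Fin L) : blk hL (cmb i j) = i :=
  Fin.ext (mydiv hL _ _ j.2)

lemma pos_cmb {n L : ℕ} (hL : 0 < L) (i : Fin n) (j : Fin L) : pos hL (cmb i j) = j :=
  Fin.ext (mymod _ _ j.2)

lemma cmb_blk_pos {n L : ℕ} (hL : 0 < L) (x : Fin (n * L)) : cmb (blk hL x) (pos hL x) = x := by
  apply Fin.ext
  show (x : ℕ) / L * L + (x : ℕ) % L = (x : ℕ)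
  rw [mul_comm]
  exact Nat.div_add_mod _ L

lemma cmb_lt_iff {n L : ℕ} (i i' : Fin n) (j j' : Fin L) :
    cmb i j < cmb i' j' ↔ i < i' ∨ (i = i' ∧ j < j') := by
  have : ((cmb i j : Fin (n*L)) : ℕ) = (j : ℕ) + L * (i : ℕ) := by show (i:ℕ)*L+j = _; ring
  have h' : ((cmb i' j' : Fin (n*L)) : ℕ) = (j' : ℕ) + L * (i' : ℕ) := by
    show (i':ℕ)*L+j' = _; ring
  rw [Fin.lt_def, this, h', block_lt j.2 j'.2, Fin.lt_def, Fin.lt_def, Fin.val_eq_val]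

lemma myInfl_cmb {n L : ℕ} (σ : Equiv.Perm (Fin n)) (τ : Equiv.Perm (Fin L))
    (i : Fin n) (j : Fin L) : (myInfl σ τ) (cmb i j) = cmb (σ i) (τ j) := by
  apply Fin.ext
  have h : ((cmb i j : Fin (n*L)) : ℕ) = (j : ℕ) + L * (i : ℕ) := by show (i:ℕ)*L+j = _; ring
  have : (cmb i j : Fin (n*L)) = ⟨(j : ℕ) + L * (i : ℕ), h ▸ (cmb i j).2⟩ := Fin.ext h
  rw [this, myInfl_val σ τ i j]
  show _ = (σ i : ℕ) * L + (τ j : ℕ)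
  ring

lemma myInfl_lt_iff {n L : ℕ} (hL : 0 < L) (σ : Equiv.Perm (Fin n)) (τ : Equiv.Perm (Fin L))
    (x y : Fin (n * L)) :
    (myInfl σ τ) x < (myInfl σ τ) y ↔
      (σ (blk hL x) < σ (blk hL y) ∨
        (σ (blk hL x) = σ (blk hL y) ∧ τ (pos hL x) < τ (pos hL y))) := by
  conv_lhs => rw [← cmb_blk_pos hL x, ← cmb_blk_pos hL y]
  rw [myInfl_cmb, myInfl_cmb, cmb_lt_iff]

lemma card_blockify {k n L : ℕ} (hL : 0 < L) (Q : (Fin k → Fin n) → Prop) [DecidablePred Q] :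
    ((Finset.univ : Finset (Fin k → Fin (n * L))).filter
      (fun f => (∀ a b : Fin k, a < b → f a < f b)
        ∧ (∀ a b : Fin k, a < b → blk hL (f a) < blk hL (f b))
        ∧ Q (fun a => blk hL (f a)))).card
    = ((Finset.univ : Finset (Fin k → Fin n)).filter
        (fun g => (∀ a b : Fin k, a < b → g a < g b) ∧ Q g)).card * L ^ k := by
  classical
  have hprod : (((Finset.univ : Finset (Fin k → Fin n)).filter
        (fun g => (∀ a b : Fin k, a < b → g a < g b) ∧ Q g)) ×ˢ
        (Finset.univ : Finset (Fin k → Fin L))).card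
      = ((Finset.univ : Finset (Fin k → Fin n)).filter
        (fun g => (∀ a b : Fin k, a < b → g a < g b) ∧ Q g)).card * L ^ k := by
    rw [Finset.card_product, Finset.card_univ, Fintype.card_fun, Fintype.card_fin,
      Fintype.card_fin]
  rw [← hprod]
  refine Finset.card_bij'
    (fun f _ => ((fun a => blk hL (f a)), (fun a => pos hL (f a))))
    (fun g _ => fun a => cmb (g.1 a) (g.2 a)) ?_ ?_ ?_ ?_
  · intro f hf
    simp only [Finset.mem_filter, Finset.mem_univ, true_and] at hf
    rw [Finset.mem_product]
    refine ⟨Finset.mem_filter.2 ⟨Finset.mem_univ _, hf.2.1, hf.2.2⟩, Finset.mem_univ _⟩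
  · intro g hg
    rw [Finset.mem_product] at hg
    have hg1 := Finset.mem_filter.1 hg.1
    simp only [Finset.mem_univ, true_and] at hg1
    simp only [Finset.mem_filter, Finset.mem_univ, true_and]
    have hblk : (fun a => blk hL (cmb (g.1 a) (g.2 a))) = g.1 :=
      funext fun a => blk_cmb hL _ _
    refine ⟨?_, ?_, ?_⟩
    · intro a b hab
      rw [cmb_lt_iff]
      exact Or.inl (hg1.1 a b hab)
    · intro a b hab
      rw [blk_cmb, blk_cmb]
      exact hg1.1 a b hab
    · rw [hblk]; exact hg1.2
  · intro f _
    funext a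
    exact cmb_blk_pos hL (f a)
  · intro g _
    refine Prod.ext ?_ ?_ <;> funext a
    · exact blk_cmb hL _ _
    · exact pos_cmb hL _ _

lemma occ_myInfl {k n L : ℕ} (π : Equiv.Perm (Fin k)) (σ : Equiv.Perm (Fin n))
    (τ : Equiv.Perm (Fin L)) (hL : 0 < L) :
    occ π σ * L ^ k ≤ occ π (myInfl σ τ) ∧
    occ π (myInfl σ τ) + n.choose k * L ^ k ≤ occ π σ * L ^ k + (n * L).choose k ∧
    n.choose k * L ^ k ≤ (n * L).choose k := by
  classical
  have hQiff : ∀ f : Fin k → Fin (n * L),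
      (∀ a b : Fin k, a < b → blk hL (f a) < blk hL (f b)) →
      ((∀ a b : Fin k, π a < π b ↔ (myInfl σ τ) (f a) < (myInfl σ τ) (f b)) ↔
        (∀ a b : Fin k, π a < π b ↔ σ (blk hL (f a)) < σ (blk hL (f b)))) := by
    intro f hb
    have hne : ∀ a b : Fin k, a ≠ b →
        ((myInfl σ τ) (f a) < (myInfl σ τ) (f b) ↔ σ (blk hL (f a)) < σ (blk hL (f b))) := by
      intro a b hab
      have hblkne : blk hL (f a) ≠ blk hL (f b) := by
        rcases lt_or_gt_of_ne hab with h | h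
        · exact ne_of_lt (hb a b h)
        · exact (ne_of_lt (hb b a h)).symm
      rw [myInfl_lt_iff hL]
      constructor
      · rintro (h | ⟨heq, _⟩)
        · exact h
        · exact absurd (σ.injective heq) hblkne
      · exact Or.inl
    constructor
    · intro h a b
      rcases eq_or_ne a b with rfl | hab
      · simp
      · rw [← hne a b hab]; exact h a b
    · intro h a b
      rcases eq_or_ne a b with rfl | hab
      · simp
      · rw [hne a b hab]; exact h a b
  set M := (Finset.univ : Finset (Fin k → Fin (n * L))).filter
    (fun f => ∀ a b : Fin k, a < b → f a < f b) with hM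
  set F := (Finset.univ : Finset (Fin k → Fin (n * L))).filter
    (fun f => (∀ a b : Fin k, a < b → f a < f b) ∧
      ∀ a b : Fin k, π a < π b ↔ (myInfl σ τ) (f a) < (myInfl σ τ) (f b)) with hF
  have hoccρ : occ π (myInfl σ τ) = F.card := by
    rw [hF, occ]
  set bmono : (Fin k → Fin (n * L)) → Prop :=
    fun f => ∀ a b : Fin k, a < b → blk hL (f a) < blk hL (f b) with hbmono
  have hsplitF := Finset.card_filter_add_card_filter_not (s := F) (p := bmono)
  have hsplitM := Finset.card_filter_add_card_filter_not (s := M) (p := bmono)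
  have hFb : (F.filter bmono).card = occ π σ * L ^ k := by
    have hset : F.filter bmono = (Finset.univ : Finset (Fin k → Fin (n * L))).filter
        (fun f => (∀ a b : Fin k, a < b → f a < f b)
          ∧ (∀ a b : Fin k, a < b → blk hL (f a) < blk hL (f b))
          ∧ (fun g : Fin k → Fin n => ∀ a b : Fin k, π a < π b ↔ σ (g a) < σ (g b))
              (fun a => blk hL (f a))) := by
      ext f
      simp only [hF, hbmono, Finset.mem_filter, Finset.mem_univ, true_and]
      constructor
      · rintro ⟨⟨hm, hc⟩, hb⟩
        exact ⟨hm, hb, (hQiff f hb).1 hc⟩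
      · rintro ⟨hm, hb, hq⟩
        exact ⟨⟨hm, (hQiff f hb).2 hq⟩, hb⟩
    rw [hset]
    refine (card_blockify hL
      (fun g : Fin k → Fin n => ∀ a b : Fin k, π a < π b ↔ σ (g a) < σ (g b))).trans ?_
    rw [occ]
  have hMb : (M.filter bmono).card = n.choose k * L ^ k := by
    have hset : M.filter bmono = (Finset.univ : Finset (Fin k → Fin (n * L))).filter
        (fun f => (∀ a b : Fin k, a < b → f a < f b)
          ∧ (∀ a b : Fin k, a < b → blk hL (f a) < blk hL (f b))
          ∧ (fun _ : Fin k → Fin n => True) (fun a => blk hL (f a))) := by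
      ext f
      simp only [hM, hbmono, Finset.mem_filter, Finset.mem_univ, true_and, and_true]
    rw [hset]
    refine (card_blockify hL (fun _ : Fin k → Fin n => True)).trans ?_
    congr 1
    rw [← card_strictMonoish k n]
    congr 1
    ext g
    simp
  have hMcard : M.card = (n * L).choose k := card_strictMonoish k (n * L)
  have hFsub : (F.filter (fun f => ¬ bmono f)).card ≤ (M.filter (fun f => ¬ bmono f)).card := by
    apply Finset.card_le_card
    intro f hf
    simp only [hF, hM, Finset.mem_filter, Finset.mem_univ, true_and] at hf ⊢
    exact ⟨hf.1.1, hf.2⟩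
  refine ⟨?_, ?_, ?_⟩
  · rw [hoccρ]; omega
  · rw [hoccρ]; omega
  · omega

lemma choose_lb (n L k : ℕ) :
    (n + 1 - k) ^ k * (n * L).choose k ≤ n ^ k * (n.choose k * L ^ k) := by
  have h1 := Nat.pow_sub_le_descFactorial n k
  have h2 := Nat.descFactorial_le_pow (n * L) k
  rw [Nat.descFactorial_eq_factorial_mul_choose] at h1 h2
  apply Nat.le_of_mul_le_mul_left _ (Nat.factorial_pos k)
  calc k.factorial * ((n + 1 - k) ^ k * (n * L).choose k)
      = (n + 1 - k) ^ k * (k.factorial * (n * L).choose k) := by ring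
  _ ≤ (n + 1 - k) ^ k * (n * L) ^ k := Nat.mul_le_mul_left _ h2
  _ ≤ (k.factorial * n.choose k) * (n * L) ^ k := Nat.mul_le_mul_right _ h1
  _ = k.factorial * (n ^ k * (n.choose k * L ^ k)) := by rw [mul_pow]; ring

lemma tend_ratio (k : ℕ) {B : ℕ → ℕ} (hB : Filter.Tendsto B Filter.atTop Filter.atTop) :
    Filter.Tendsto (fun m => (((B m + 1 - k : ℕ) : ℝ) / (B m : ℝ)) ^ k)
      Filter.atTop (nhds 1) := by
  have hB' : Filter.Tendsto (fun m => (B m : ℝ)) Filter.atTop Filter.atTop :=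
    tendsto_natCast_atTop_atTop.comp hB
  have h0 : Filter.Tendsto (fun m => ((B m + 1 - k : ℕ) : ℝ) / (B m : ℝ))
      Filter.atTop (nhds 1) := by
    have h1 : Filter.Tendsto (fun m => 1 + (1 - (k : ℝ)) / (B m : ℝ))
        Filter.atTop (nhds 1) := by
      have h2 := (tendsto_const_nhds (x := (1 - (k : ℝ))) (f := Filter.atTop)).div_atTop hB'
      simpa using (tendsto_const_nhds (x := (1:ℝ)) (f := Filter.atTop)).add h2
    apply h1.congr'
    filter_upwards [hB.eventually_ge_atTop k, hB.eventually_ge_atTop 1] with m hk1 hm1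
    have hBm : (B m : ℝ) ≠ 0 := by
      have : (0:ℕ) < B m := by omega
      positivity
    have hle : k ≤ B m + 1 := by omega
    have hcast : ((B m + 1 - k : ℕ) : ℝ) = (B m : ℝ) + 1 - k := by
      push_cast [hle]
      ring
    rw [hcast]
    field_simp
    ring
  simpa using h0.pow k

lemma main_mem (k : ℕ) (v₁ v₂ : Equiv.Perm (Fin k) → ℝ)
    (h₁ : v₁ ∈ feasibleRegion k) (h₂ : v₂ ∈ classicalFeasibleRegion k) :
    (v₁, v₂) ∈ mixedFeasibleRegion k := by
  obtain ⟨A, τ, hA, hτ⟩ := h₁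
  obtain ⟨B, σc, hB, hσ⟩ := h₂
  rcases Nat.eq_zero_or_pos k with rfl | hk
  · refine ⟨A, τ, hA, hτ, ?_⟩
    intro π
    have hocc1 : ∀ (N : ℕ) (ρ : Equiv.Perm (Fin N)), occ π ρ = 1 := by
      intro N ρ
      rw [occ]
      have htriv : ∀ f : Fin 0 → Fin N, ((∀ a b : Fin 0, a < b → f a < f b) ∧
          ∀ a b : Fin 0, π a < π b ↔ ρ (f a) < ρ (f b)) :=
        fun f => ⟨fun a => a.elim0, fun a => a.elim0⟩
      rw [Finset.filter_true_of_mem (fun f _ => htriv f), Finset.card_univ]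
      simp [Fintype.card_fun]
    have hconst : ∀ (C : ℕ → ℕ) (ρ : ∀ m, Equiv.Perm (Fin (C m))),
        (fun m => (occ π (ρ m) : ℝ) / ((C m).choose 0 : ℝ)) = fun _ => (1:ℝ) := by
      intro C ρ; funext m; rw [hocc1]; simp
    have hv2 : v₂ π = 1 := by
      have h := hσ π
      rw [hconst B σc] at h
      exact tendsto_nhds_unique h tendsto_const_nhds
    show Filter.Tendsto (fun m => (occ π (τ m) : ℝ) / ((A m).choose 0 : ℝ))
      Filter.atTop (nhds (v₂ π))
    rw [hconst A τ, hv2]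
    exact tendsto_const_nhds
  · refine ⟨fun m => B m * A m, fun m => myInfl (σc m) (τ m),
      hB.atTop_mul_atTop hA, ?_, ?_⟩
    · intro π
      have hA' : Filter.Tendsto (fun m => (A m : ℝ)) Filter.atTop Filter.atTop :=
        tendsto_natCast_atTop_atTop.comp hA
      have hhigh : Filter.Tendsto
          (fun m => (cocc π (τ m) : ℝ) / (A m : ℝ) + (k : ℝ) / (A m : ℝ))
          Filter.atTop (nhds (v₁ π)) := by
        simpa using (hτ π).add
          ((tendsto_const_nhds (x := (k : ℝ)) (f := Filter.atTop)).div_atTop hA')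
      refine tendsto_of_tendsto_of_tendsto_of_le_of_le' (hτ π) hhigh ?_ ?_
      · filter_upwards [hA.eventually_ge_atTop k, hA.eventually_ge_atTop 1,
          hB.eventually_ge_atTop 1] with m h1 h2 h3
        obtain ⟨hlo, _⟩ := cocc_myInfl π (σc m) (τ m) hk h1
        have hBpos : (0:ℝ) < (B m : ℝ) := by exact_mod_cast Nat.lt_of_lt_of_le Nat.zero_lt_one h3
        have hApos : (0:ℝ) < (A m : ℝ) := by exact_mod_cast Nat.lt_of_lt_of_le Nat.zero_lt_one h2
        rw [Nat.cast_mul]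
        calc (cocc π (τ m) : ℝ) / (A m : ℝ)
            = ((B m : ℝ) * (cocc π (τ m) : ℝ)) / ((B m : ℝ) * (A m : ℝ)) :=
              (mul_div_mul_left _ _ (ne_of_gt hBpos)).symm
        _ ≤ (cocc π (myInfl (σc m) (τ m)) : ℝ) / ((B m : ℝ) * (A m : ℝ)) := by
              apply (div_le_div_iff_of_pos_right (by positivity)).2
              exact_mod_cast hlo
      · filter_upwards [hA.eventually_ge_atTop k, hA.eventually_ge_atTop 1,
          hB.eventually_ge_atTop 1] with m h1 h2 h3
        obtain ⟨_, hhi⟩ := cocc_myInfl π (σc m) (τ m) hk h1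
        have hBpos : (0:ℝ) < (B m : ℝ) := by exact_mod_cast Nat.lt_of_lt_of_le Nat.zero_lt_one h3
        have hApos : (0:ℝ) < (A m : ℝ) := by exact_mod_cast Nat.lt_of_lt_of_le Nat.zero_lt_one h2
        rw [Nat.cast_mul]
        have key : (cocc π (myInfl (σc m) (τ m)) : ℝ) ≤
            (B m : ℝ) * (cocc π (τ m) : ℝ) + (B m : ℝ) * (k : ℝ) := by exact_mod_cast hhi
        have expand : ((B m : ℝ) * (cocc π (τ m) : ℝ) + (B m : ℝ) * (k : ℝ)) /
            ((B m : ℝ) * (A m : ℝ))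
            = (cocc π (τ m) : ℝ) / (A m : ℝ) + (k : ℝ) / (A m : ℝ) := by
          field_simp
        calc (cocc π (myInfl (σc m) (τ m)) : ℝ) / ((B m : ℝ) * (A m : ℝ))
            ≤ ((B m : ℝ) * (cocc π (τ m) : ℝ) + (B m : ℝ) * (k : ℝ)) /
              ((B m : ℝ) * (A m : ℝ)) := by
              apply (div_le_div_iff_of_pos_right (by positivity)).2
              exact key
        _ = _ := expand
    · intro π
      have ht := tend_ratio k hB
      have hlowlim : Filter.Tendsto (fun m => (occ π (σc m) : ℝ) / ((B m).choose k : ℝ) *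
          (((B m + 1 - k : ℕ) : ℝ) / (B m : ℝ)) ^ k) Filter.atTop (nhds (v₂ π)) := by
        simpa using (hσ π).mul ht
      have hhighlim : Filter.Tendsto (fun m => (occ π (σc m) : ℝ) / ((B m).choose k : ℝ) +
          (1 - (((B m + 1 - k : ℕ) : ℝ) / (B m : ℝ)) ^ k)) Filter.atTop (nhds (v₂ π)) := by
        simpa using (hσ π).add
          ((tendsto_const_nhds (x := (1:ℝ)) (f := Filter.atTop)).sub ht)
      refine tendsto_of_tendsto_of_tendsto_of_le_of_le' hlowlim hhighlim ?_ ?_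
      · filter_upwards [hA.eventually_ge_atTop 1, hB.eventually_ge_atTop 1,
          hB.eventually_ge_atTop k] with m h2 h3 h4
        have hA0 : 0 < A m := by omega
        obtain ⟨f1n, f2n, f3n⟩ := occ_myInfl π (σc m) (τ m) hA0
        have fkn := choose_lb (B m) (A m) k
        have hc1 : 0 < (B m).choose k := Nat.choose_pos h4
        have hc2 : 0 < (B m * A m).choose k := Nat.choose_pos
          (le_trans h4 (by calc B m = B m * 1 := (mul_one _).symm
            _ ≤ B m * A m := Nat.mul_le_mul_left _ h2))
        have F1 : (occ π (σc m) : ℝ) * (A m : ℝ) ^ k ≤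
            (occ π (myInfl (σc m) (τ m)) : ℝ) := by exact_mod_cast f1n
        have FK : ((B m + 1 - k : ℕ) : ℝ) ^ k * ((B m * A m).choose k : ℝ) ≤
            (B m : ℝ) ^ k * (((B m).choose k : ℝ) * (A m : ℝ) ^ k) := by exact_mod_cast fkn
        have hc1R : (0:ℝ) < ((B m).choose k : ℝ) := by exact_mod_cast hc1
        have hc2R : (0:ℝ) < ((B m * A m).choose k : ℝ) := by exact_mod_cast hc2
        have hBpos : (0:ℝ) < (B m : ℝ) := by exact_mod_cast Nat.lt_of_lt_of_le Nat.zero_lt_one h3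
        have ho1 : (0:ℝ) ≤ (occ π (σc m) : ℝ) := Nat.cast_nonneg _
        rw [div_pow, div_mul_div_comm, div_le_div_iff₀ (by positivity) hc2R]
        nlinarith [mul_le_mul_of_nonneg_left FK ho1,
          mul_le_mul_of_nonneg_right F1 (by positivity : (0:ℝ) ≤ ((B m).choose k : ℝ) * (B m : ℝ) ^ k)]
      · filter_upwards [hA.eventually_ge_atTop 1, hB.eventually_ge_atTop 1,
          hB.eventually_ge_atTop k] with m h2 h3 h4
        have hA0 : 0 < A m := by omega
        obtain ⟨f1n, f2n, f3n⟩ := occ_myInfl π (σc m) (τ m) hA0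
        have fkn := choose_lb (B m) (A m) k
        have hc1 : 0 < (B m).choose k := Nat.choose_pos h4
        have hc2 : 0 < (B m * A m).choose k := Nat.choose_pos
          (le_trans h4 (by calc B m = B m * 1 := (mul_one _).symm
            _ ≤ B m * A m := Nat.mul_le_mul_left _ h2))
        have hc1R : (0:ℝ) < ((B m).choose k : ℝ) := by exact_mod_cast hc1
        have hc2R : (0:ℝ) < ((B m * A m).choose k : ℝ) := by exact_mod_cast hc2
        have hBpos : (0:ℝ) < (B m : ℝ) := by exact_mod_cast Nat.lt_of_lt_of_le Nat.zero_lt_one h3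
        have ho1 : (0:ℝ) ≤ (occ π (σc m) : ℝ) := Nat.cast_nonneg _
        have F2 : (occ π (myInfl (σc m) (τ m)) : ℝ) + ((B m).choose k : ℝ) * (A m : ℝ) ^ k ≤
            (occ π (σc m) : ℝ) * (A m : ℝ) ^ k + ((B m * A m).choose k : ℝ) := by
          exact_mod_cast f2n
        have F3 : ((B m).choose k : ℝ) * (A m : ℝ) ^ k ≤ ((B m * A m).choose k : ℝ) := by
          exact_mod_cast f3n
        have FK : ((B m + 1 - k : ℕ) : ℝ) ^ k * ((B m * A m).choose k : ℝ) ≤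
            (B m : ℝ) ^ k * (((B m).choose k : ℝ) * (A m : ℝ) ^ k) := by exact_mod_cast fkn
        have stepA : (occ π (myInfl (σc m) (τ m)) : ℝ) / ((B m * A m).choose k : ℝ) ≤
            ((occ π (σc m) : ℝ) * (A m : ℝ) ^ k + ((B m * A m).choose k : ℝ) -
              ((B m).choose k : ℝ) * (A m : ℝ) ^ k) / ((B m * A m).choose k : ℝ) := by
          apply (div_le_div_iff_of_pos_right hc2R).2
          linarith
        have stepB : ((occ π (σc m) : ℝ) * (A m : ℝ) ^ k + ((B m * A m).choose k : ℝ) -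
              ((B m).choose k : ℝ) * (A m : ℝ) ^ k) / ((B m * A m).choose k : ℝ)
            = ((occ π (σc m) : ℝ) * (A m : ℝ) ^ k) / ((B m * A m).choose k : ℝ) + 1 -
              (((B m).choose k : ℝ) * (A m : ℝ) ^ k) / ((B m * A m).choose k : ℝ) := by
          field_simp
        have stepC : ((occ π (σc m) : ℝ) * (A m : ℝ) ^ k) / ((B m * A m).choose k : ℝ) ≤
            (occ π (σc m) : ℝ) / ((B m).choose k : ℝ) := by
          rw [div_le_div_iff₀ hc2R hc1R]
          nlinarith [mul_le_mul_of_nonneg_left F3 ho1]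
        have stepD : (((B m + 1 - k : ℕ) : ℝ) / (B m : ℝ)) ^ k ≤
            (((B m).choose k : ℝ) * (A m : ℝ) ^ k) / ((B m * A m).choose k : ℝ) := by
          rw [div_pow, div_le_div_iff₀ (by positivity) hc2R]
          nlinarith [FK]
        linarith [stepA, stepB.le, stepB.ge, stepC, stepD]

/-- For any `v₁ ∈ P_k` and `v₂ ∈ clP_k` there is a single sequence of permutations realizing
`v₁` as limit of consecutive pattern densities and `v₂` as limit of classical pattern
densities; equivalently, the mixed feasible region equals the product `P_k × clP_k`. -/
theorem mixedFeasibleRegion_eq_prod (k : ℕ) :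
    (∀ v₁ ∈ feasibleRegion k, ∀ v₂ ∈ classicalFeasibleRegion k,
      (v₁, v₂) ∈ mixedFeasibleRegion k) ∧
    mixedFeasibleRegion k = (feasibleRegion k) ×ˢ (classicalFeasibleRegion k) := by
  refine ⟨fun v₁ h₁ v₂ h₂ => main_mem k v₁ v₂ h₁ h₂, ?_⟩
  ext p
  constructor
  · rintro ⟨N, σ, hN, h1, h2⟩
    exact ⟨⟨N, σ, hN, h1⟩, ⟨N, σ, hN, h2⟩⟩
  · rintro ⟨hp1, hp2⟩
    exact main_mem k p.1 p.2 hp1 hp2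
end

section
/- For the overlap graph Ov(3) (vertices 12 and 21, and six edges labeled by S_3), the cycle polytope P(Ov(3)) ⊆ ℝ^{S_3} is a 4-dimensional polytope with exactly 5 vertices, namely the normalized incidence vectors of the 5 simple cycles: the loop at 12 (edge 123), the loop at 21 (edge 321), and the four 2-cycles formed by choosing one of the edges {132, 231} from 12 to 21 and one of the edges {213, 312} from 21 to 12. -/
open Filter Finset

variable {V E : Type*}

/-- The permutation `123`. -/
def p123 : Equiv.Perm (Fin 3) := 1
/-- The permutation `132`. -/
def p132 : Equiv.Perm (Fin 3) :=
  Equiv.mk ![0, 2, 1] ![0, 2, 1] (by intro x; fin_cases x <;> rfl) (by intro x; fin_cases x <;> rfl)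
/-- The permutation `213`. -/
def p213 : Equiv.Perm (Fin 3) :=
  Equiv.mk ![1, 0, 2] ![1, 0, 2] (by intro x; fin_cases x <;> rfl) (by intro x; fin_cases x <;> rfl)
/-- The permutation `231`. -/
def p231 : Equiv.Perm (Fin 3) :=
  Equiv.mk ![1, 2, 0] ![2, 0, 1] (by intro x; fin_cases x <;> rfl) (by intro x; fin_cases x <;> rfl)
/-- The permutation `312`. -/
def p312 : Equiv.Perm (Fin 3) :=
  Equiv.mk ![2, 0, 1] ![1, 2, 0] (by intro x; fin_cases x <;> rfl) (by intro x; fin_cases x <;> rfl)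
/-- The permutation `321`. -/
def p321 : Equiv.Perm (Fin 3) :=
  Equiv.mk ![2, 1, 0] ![2, 1, 0] (by intro x; fin_cases x <;> rfl) (by intro x; fin_cases x <;> rfl)

/-!
An edge `π` of `Ov(3)` starts at `12` iff `π 0 < π 1` and ends at `12` iff `π 1 < π 2`, and a
simple cycle has at most `|S_2| = 2` edges, so a finite check lists the simple cycles: the loops
`123`, `321` and the four `2`-cycles. Distinct cycle vectors `x ≠ y` satisfy
`x ⬝ᵥ y < x ⬝ᵥ x`, so the linear functional `x ⬝ᵥ ·` exposes each `x` as a vertex of the hull.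
The exchange identity `e[a,c] + e[b,d] = e[a,d] + e[b,c]` puts `e[231,312]` in the affine span
of the other five vectors, which are linearly independent, so the polytope has dimension `4`.
-/

section Cycles

variable {src tgt : E → V}

theorem IsSimpleCycle.length_le_card [Fintype V] {c : List E} (h : IsSimpleCycle src tgt c) :
    c.length ≤ Fintype.card V := by
  simpa using h.2.length_le_card

theorem isSimpleCycle_singleton {a : E} : IsSimpleCycle src tgt [a] ↔ tgt a = src a := by
  simp [IsSimpleCycle, IsCycleWalk, List.Chain'.eq_1]

theorem isSimpleCycle_pair {a b : E} :
    IsSimpleCycle src tgt [a, b] ↔ tgt a = src b ∧ tgt b = src a ∧ src a ≠ src b := by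
  simp [IsSimpleCycle, IsCycleWalk, List.Chain'.eq_1, and_assoc]

variable [DecidableEq E]

theorem List.Perm.cycleVec_eq {c d : List E} (h : c.Perm d) : cycleVec c = cycleVec d := by
  funext e
  simp [cycleVec, h.count_eq, h.length_eq]

theorem cycleVec_pair_add_cycleVec_pair (a b c d : E) :
    cycleVec [a, c] + cycleVec [b, d] = cycleVec [a, d] + cycleVec [b, c] := by
  funext e
  simp only [cycleVec, Pi.add_apply, List.count_cons, List.count_nil, List.length_cons,
    List.length_nil]
  push_cast
  ring

theorem dotProduct_cycleVec [Fintype E] (x : E → ℝ) (c : List E) :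
    x ⬝ᵥ cycleVec c = (c.map x).sum / c.length := by
  rw [Finset.sum_list_map_count, Finset.sum_div, Finset.sum_subset (Finset.subset_univ _)
    fun e _ he => by simp [List.count_eq_zero_of_not_mem (List.mem_toFinset.not.1 he)]]
  refine Finset.sum_congr rfl fun e _ => ?_
  simp only [cycleVec, nsmul_eq_mul]
  ring

end Cycles

theorem mem_extremePoints_convexHull_of_forall_lt {E : Type*} [AddCommGroup E] [Module ℝ E]
    {s : Set E} {x : E} (hx : x ∈ s) (l : E →ₗ[ℝ] ℝ) (hl : ∀ y ∈ s, y ≠ x → l y < l x) :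
    x ∈ (convexHull ℝ s).extremePoints ℝ := by
  have hlt : ∀ y ∈ convexHull ℝ s, y ≠ x → l y < l x := by
    intro y hy hyx
    rcases (s \ {x}).eq_empty_or_nonempty with hempty | hne
    · exact absurd (convexHull_min (Set.sdiff_eq_empty.1 hempty) (convex_singleton x) hy) hyx
    have hrest : convexHull ℝ (s \ {x}) ⊆ {y | l y < l x} :=
      convexHull_min (fun y hy => hl y hy.1 hy.2) (convex_halfSpace_lt l.isLinear _)
    rw [← Set.insert_eq_of_mem hx, ← Set.insert_sdiff_singleton, convexHull_insert hne,
      mem_convexJoin] at hy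
    obtain ⟨x', hx', z, hz, a, b, ha, hb, hab, rfl⟩ := hy
    rw [Set.mem_singleton_iff] at hx'
    subst x'
    have hb : 0 < b := hb.lt_of_ne <| by rintro rfl; simp_all
    have hz : l z < l x := hrest hz
    have hlx : l x = a * l x + b * l x := by rw [← add_mul, hab, one_mul]
    simp only [map_add, map_smul, smul_eq_mul]
    linarith [mul_lt_mul_of_pos_left hz hb]
  rw [(convex_convexHull ℝ s).mem_extremePoints_iff_convex_sdiff]
  refine ⟨subset_convexHull ℝ s hx, ?_⟩
  have hsdiff : convexHull ℝ s \ {x} = convexHull ℝ s ∩ {y | l y < l x} := by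
    ext y
    exact ⟨fun ⟨hy, hyx⟩ => ⟨hy, hlt y hy hyx⟩, fun ⟨hy, hly⟩ => ⟨hy, by rintro rfl; simp at hly⟩⟩
  rw [hsdiff]
  exact (convex_convexHull ℝ s).inter (convex_halfSpace_lt l.isLinear _)

theorem extremePoints_convexHull_eq_of_dotProduct_lt {ι : Type*} [Fintype ι]
    {s : Set (ι → ℝ)} (hs : ∀ x ∈ s, ∀ y ∈ s, y ≠ x → x ⬝ᵥ y < x ⬝ᵥ x) :
    (convexHull ℝ s).extremePoints ℝ = s :=
  extremePoints_convexHull_subset.antisymm fun x hx =>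
    mem_extremePoints_convexHull_of_forall_lt hx (dotProductBilin ℝ ℝ x) (hs x hx)

theorem patOf_fin_two {f : Fin 2 → ℕ} (h : f 0 ≠ f 1) :
    patOf f = if f 0 < f 1 then 1 else Equiv.swap 0 1 := by
  suffices hsort : (if f 0 < f 1 then 1 else Equiv.swap 0 1) = Tuple.sort f by
    rw [patOf, ← hsort]
    split_ifs <;> rfl
  refine Tuple.eq_sort_iff.2 ⟨Fin.monotone_iff_le_succ.2 fun i => ?_, fun i j hij => ?_⟩
  · fin_cases i
    split_ifs <;> simp <;> omega
  · fin_cases i <;> fin_cases j <;> split_ifs <;> simp_all [eq_comm]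

theorem firstPat_fin_three (π : Equiv.Perm (Fin 3)) :
    firstPat π = if π 0 < π 1 then 1 else Equiv.swap 0 1 := by
  rw [firstPat, patOf_fin_two (by simp [Fin.val_inj])]
  rfl

theorem lastPat_fin_three (π : Equiv.Perm (Fin 3)) :
    lastPat π = if π 1 < π 2 then 1 else Equiv.swap 0 1 := by
  rw [lastPat, patOf_fin_two (by simp [Fin.val_inj])]
  rfl

theorem isSimpleCycle_overlap3_singleton_iff {a : Equiv.Perm (Fin 3)} :
    IsSimpleCycle firstPat lastPat [a] ↔ a = p123 ∨ a = p321 := by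
  rw [isSimpleCycle_singleton, firstPat_fin_three, lastPat_fin_three]
  revert a
  decide

theorem isSimpleCycle_overlap3_pair_iff {a b : Equiv.Perm (Fin 3)} :
    IsSimpleCycle firstPat lastPat [a, b] ↔
      (a = p132 ∨ a = p231) ∧ (b = p213 ∨ b = p312) ∨
        (a = p213 ∨ a = p312) ∧ (b = p132 ∨ b = p231) := by
  rw [isSimpleCycle_pair, firstPat_fin_three, firstPat_fin_three, lastPat_fin_three,
    lastPat_fin_three]
  revert a b
  decide

noncomputable def overlap3CycleVecs : Set (Equiv.Perm (Fin 3) → ℝ) :=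
  {cycleVec [p123], cycleVec [p321],
    cycleVec [p132, p213], cycleVec [p132, p312],
    cycleVec [p231, p213], cycleVec [p231, p312]}

theorem setOf_isSimpleCycle_overlap3 :
    {x | ∃ c, IsSimpleCycle (firstPat (k := 2)) lastPat c ∧ x = cycleVec c} =
      overlap3CycleVecs := by
  ext x
  constructor
  · rintro ⟨c, hc, rfl⟩
    have hlen : c.length ≤ 2 := by simpa [Fintype.card_perm] using hc.length_le_card
    rcases c with _ | ⟨a, _ | ⟨b, _ | ⟨_, _⟩⟩⟩
    · exact absurd rfl hc.1.1
    · rcases isSimpleCycle_overlap3_singleton_iff.1 hc with rfl | rfl <;>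
        simp [overlap3CycleVecs]
    · rcases isSimpleCycle_overlap3_pair_iff.1 hc with
        ⟨rfl | rfl, rfl | rfl⟩ | ⟨rfl | rfl, rfl | rfl⟩ <;>
        simp [overlap3CycleVecs, (List.Perm.swap _ _ []).cycleVec_eq]
    · simp at hlen
  · simp only [overlap3CycleVecs, Set.mem_insert_iff, Set.mem_singleton_iff]
    rintro (rfl | rfl | rfl | rfl | rfl | rfl) <;>
      exact ⟨_, by simp [isSimpleCycle_overlap3_singleton_iff, isSimpleCycle_overlap3_pair_iff],
        rfl⟩

theorem overlap3CycleVecs_dotProduct_lt :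
    ∀ x ∈ overlap3CycleVecs, ∀ y ∈ overlap3CycleVecs, y ≠ x → x ⬝ᵥ y < x ⬝ᵥ x := by
  simp only [overlap3CycleVecs, Set.mem_insert_iff, Set.mem_singleton_iff]
  rintro x (rfl | rfl | rfl | rfl | rfl | rfl) y (rfl | rfl | rfl | rfl | rfl | rfl) hne <;>
    first
    | exact absurd rfl hne
    | simp +decide [dotProduct_cycleVec, cycleVec]

theorem linearIndependent_overlap3_cycleVecs :
    LinearIndependent ℝ ![cycleVec [p123], cycleVec [p321],
      cycleVec [p132, p213], cycleVec [p132, p312], cycleVec [p231, p213]] := by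
  rw [Fintype.linearIndependent_iff]
  intro g hg
  rw [Fin.sum_univ_five] at hg
  have h123 := congrFun hg p123
  have h321 := congrFun hg p321
  have h312 := congrFun hg p312
  have h231 := congrFun hg p231
  have h213 := congrFun hg p213
  simp +decide [cycleVec] at h123 h321 h312 h231 h213
  intro i
  fin_cases i <;> simp <;> linarith

theorem finrank_vectorSpan_overlap3CycleVecs :
    Module.finrank ℝ (vectorSpan ℝ overlap3CycleVecs) = 4 := by
  have hS : overlap3CycleVecs = insert (cycleVec [p231, p312]) (Set.range ![cycleVec [p123],
      cycleVec [p321], cycleVec [p132, p213], cycleVec [p132, p312], cycleVec [p231, p213]]) := by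
    ext x
    simp only [overlap3CycleVecs, Matrix.range_cons, Matrix.range_empty, Set.union_empty,
      Set.mem_insert_iff, Set.mem_union, Set.mem_singleton_iff]
    tauto
  have hexchange : cycleVec [p231, p312] =
      (cycleVec [p132, p312] -ᵥ cycleVec [p132, p213]) +ᵥ cycleVec [p231, p213] := by
    rw [vsub_eq_sub, vadd_eq_add]
    linear_combination cycleVec_pair_add_cycleVec_pair p132 p231 p213 p312
  rw [hS, vectorSpan_insert_eq_vectorSpan]
  · exact linearIndependent_overlap3_cycleVecs.affineIndependent.finrank_vectorSpan (by simp)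
  rw [hexchange]
  exact AffineSubspace.vadd_mem_of_mem_direction
    (by rw [direction_affineSpan]; exact vsub_mem_vectorSpan ℝ ⟨3, rfl⟩ ⟨2, rfl⟩)
    (mem_affineSpan ℝ ⟨4, rfl⟩)

theorem cyclePolytope_overlap3_eq :
    cyclePolytope (firstPat (k := 2)) lastPat = convexHull ℝ overlap3CycleVecs := by
  rw [cyclePolytope, setOf_isSimpleCycle_overlap3]

/-- The cycle polytope of the overlap graph `Ov(3)` (vertices `S_2`, edges `S_3`, the edge
`π` going from the pattern of its first two entries to the pattern of its last two entries)
is a `4`-dimensional polytope whose vertices are exactly the normalized incidence vectors of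
the simple cycles of `Ov(3)`: the loop `123` at `12`, the loop `321` at `21`, and the four
`2`-cycles obtained by choosing one edge among `{132, 231}` (from `12` to `21`) and one edge
among `{213, 312}` (from `21` to `12`). -/
theorem cyclePolytope_overlap3 :
    Module.finrank ℝ
        (vectorSpan ℝ (cyclePolytope (firstPat (k := 2)) lastPat)) = 4 ∧
    Set.extremePoints ℝ (cyclePolytope (firstPat (k := 2)) lastPat)
      = {cycleVec [p123], cycleVec [p321],
          cycleVec [p132, p213], cycleVec [p132, p312],
          cycleVec [p231, p213], cycleVec [p231, p312]} := by
  rw [cyclePolytope_overlap3_eq, ← direction_affineSpan, affineSpan_convexHull,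
    direction_affineSpan]
  exact ⟨finrank_vectorSpan_overlap3CycleVecs,
    extremePoints_convexHull_eq_of_dotProduct_lt overlap3CycleVecs_dotProduct_lt⟩
end
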